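/- arXiv:2201.00338 — 7 statements merged into one kernel-verified Lean document; each statement's English description precedes it below -/
import Mathlib

section
/- Let X, Y be real Hilbert spaces, M : X → Y a bounded linear operator, and Q : X → [0,∞] proper, convex and weakly lower semicontinuous. Suppose (x⋆, y⋆) ∈ X × Y satisfies M x⋆ = y⋆ and there exists η ∈ Y with M*η ∈ ∂Q(x⋆). Then for all δ, α > 0, all yδ ∈ Y with ‖yδ − y⋆‖ ≤ δ, and every minimizer xαδ of the functional x ↦ ½‖M x − yδ‖² + α Q(x), one has ‖M xαδ − yδ‖ ≤ δ + 2α‖η‖. -/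
/-! Compare the Tikhonov functional at the minimizer `xad` with its value at `xstar`: writing
`r = ‖M xad - yδ‖`, this gives `r² / 2 + α Q xad ≤ δ² / 2 + α Q xstar`. The source condition
bounds `Q xstar - Q xad` by `-⟪η, M xad - ystar⟫ ≤ ‖η‖ (r + δ)`, so
`r² ≤ δ² + 2α‖η‖ (r + δ)`, that is `(r - δ - 2α‖η‖) (r + δ) ≤ 0`. -/

open scoped ENNReal InnerProductSpace
open Filter

noncomputable section

/-- `ξ` is a subgradient of the extended-real-valued functional `Q` at `xs`:
`Q x ≥ Q xs + ⟪ξ, x - xs⟫` for all `x` (inequality in the extended reals). -/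
def IsSubgrad {X : Type*} [NormedAddCommGroup X] [InnerProductSpace ℝ X]
    (Q : X → ℝ≥0∞) (xs ξ : X) : Prop :=
  ∀ x, (Q xs : EReal) + ((⟪ξ, x - xs⟫_ℝ : ℝ) : EReal) ≤ (Q x : EReal)

/-- Convexity of an extended-real-valued functional. -/
def ConvexE {X : Type*} [AddCommGroup X] [Module ℝ X] (Q : X → ℝ≥0∞) : Prop :=
  ∀ x y : X, ∀ t : ℝ, 0 ≤ t → t ≤ 1 →
    Q (t • x + (1 - t) • y) ≤ ENNReal.ofReal t * Q x + ENNReal.ofReal (1 - t) * Q y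

/-- Weak (sequential) lower semicontinuity of an extended-real-valued functional. -/
def WeakLSC {X : Type*} [NormedAddCommGroup X] [NormedSpace ℝ X] (Q : X → ℝ≥0∞) : Prop :=
  ∀ (x : X) (u : ℕ → X),
    (∀ f : X →L[ℝ] ℝ, Tendsto (fun n => f (u n)) atTop (nhds (f x))) →
    (Q x : EReal) ≤ liminf (fun n => ((Q (u n) : ℝ≥0∞) : EReal)) atTop

namespace IsSubgrad

variable {X : Type*} [NormedAddCommGroup X] [InnerProductSpace ℝ X] {Q : X → ℝ≥0∞} {xs ξ x : X}

theorem ne_top (h : IsSubgrad Q xs ξ) (hx : Q x ≠ ∞) : Q xs ≠ ∞ := by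
  intro hxs
  have hle := h x
  rw [hxs, EReal.coe_ennreal_top, EReal.top_add_coe, top_le_iff] at hle
  exact hx (EReal.coe_ennreal_eq_top_iff.mp hle)

theorem toReal_add_inner_le (h : IsSubgrad Q xs ξ) (hx : Q x ≠ ∞) :
    (Q xs).toReal + ⟪ξ, x - xs⟫_ℝ ≤ (Q x).toReal := by
  have hle := EReal.toReal_le_toReal (h x) (EReal.add_ne_bot_iff.mpr ⟨by simp, by simp⟩)
    (by simpa using hx)
  rwa [EReal.toReal_add (by simpa using h.ne_top hx) (by simp) (by simp) (by simp),
    EReal.toReal_coe_ennreal, EReal.toReal_coe_ennreal, EReal.toReal_coe] at hle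

end IsSubgrad

namespace ENNReal

variable {a b α : ℝ} {p q : ℝ≥0∞}

theorem ne_top_of_ofReal_add_ofReal_mul_le (hα : 0 < α) (hq : q ≠ ∞)
    (h : ENNReal.ofReal a + ENNReal.ofReal α * p ≤ ENNReal.ofReal b + ENNReal.ofReal α * q) :
    p ≠ ∞ := by
  have hrhs : ENNReal.ofReal b + ENNReal.ofReal α * q ≠ ∞ := by finiteness
  have hlhs := (h.trans_lt hrhs.lt_top).ne
  intro hp
  rw [hp, mul_top (ofReal_pos.mpr hα).ne'] at hlhs
  simp at hlhs

theorem add_mul_toReal_le_of_ofReal_add_ofReal_mul_le (ha : 0 ≤ a) (hb : 0 ≤ b) (hα : 0 ≤ α)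
    (hp : p ≠ ∞) (hq : q ≠ ∞)
    (h : ENNReal.ofReal a + ENNReal.ofReal α * p ≤ ENNReal.ofReal b + ENNReal.ofReal α * q) :
    a + α * p.toReal ≤ b + α * q.toReal := by
  have hreal := toReal_mono (by finiteness) h
  rwa [toReal_add (by finiteness) (by finiteness), toReal_add (by finiteness) (by finiteness),
    toReal_mul, toReal_mul, toReal_ofReal ha, toReal_ofReal hb, toReal_ofReal hα] at hreal

end ENNReal

theorem le_add_of_sq_le_sq_add_mul {r δ c : ℝ} (hδ : 0 ≤ δ) (hc : 0 ≤ c)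
    (h : r ^ 2 ≤ δ ^ 2 + c * (r + δ)) : r ≤ δ + c := by
  nlinarith

theorem residual_estimate_general
    {X Y : Type*} [NormedAddCommGroup X] [InnerProductSpace ℝ X] [CompleteSpace X]
    [NormedAddCommGroup Y] [InnerProductSpace ℝ Y] [CompleteSpace Y]
    (M : X →L[ℝ] Y) (Q : X → ℝ≥0∞)
    (hproper : ∃ x, Q x ≠ ∞)
    (xstar : X) (ystar : Y) (hsol : M xstar = ystar)
    (η : Y) (hsrc : IsSubgrad Q xstar (ContinuousLinearMap.adjoint M η))
    (δ α : ℝ) (hα : 0 < α)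
    (yδ : Y) (hdata : ‖yδ - ystar‖ ≤ δ)
    (xad : X)
    (hmin : ∀ x : X,
      ENNReal.ofReal (‖M xad - yδ‖ ^ 2 / 2) + ENNReal.ofReal α * Q xad ≤
        ENNReal.ofReal (‖M x - yδ‖ ^ 2 / 2) + ENNReal.ofReal α * Q x) :
    ‖M xad - yδ‖ ≤ δ + 2 * α * ‖η‖ := by
  obtain ⟨x₀, hx₀⟩ := hproper
  have hQstar : Q xstar ≠ ∞ := hsrc.ne_top hx₀
  have hQad : Q xad ≠ ∞ := ENNReal.ne_top_of_ofReal_add_ofReal_mul_le hα hQstar (hmin xstar)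
  have hcompare := ENNReal.add_mul_toReal_le_of_ofReal_add_ofReal_mul_le (by positivity)
    (by positivity) hα.le hQad hQstar (hmin xstar)
  have hsub := hsrc.toReal_add_inner_le hQad
  rw [ContinuousLinearMap.adjoint_inner_left, map_sub, hsol] at hsub
  have hstar : ‖M xstar - yδ‖ ≤ δ := by rwa [hsol, norm_sub_rev]
  have hδ : 0 ≤ δ := (norm_nonneg _).trans hdata
  have hinner : -⟪η, M xad - ystar⟫_ℝ ≤ ‖η‖ * (‖M xad - yδ‖ + δ) := calc
    -⟪η, M xad - ystar⟫_ℝ ≤ ‖η‖ * ‖M xad - ystar‖ :=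
      (neg_le_abs _).trans (abs_real_inner_le_norm _ _)
    _ ≤ ‖η‖ * (‖M xad - yδ‖ + δ) := by
      gcongr
      exact (norm_sub_le_norm_sub_add_norm_sub _ yδ _).trans (by gcongr)
  apply le_add_of_sq_le_sq_add_mul hδ (by positivity)
  nlinarith [pow_le_pow_left₀ (norm_nonneg _) hstar 2, mul_le_mul_of_nonneg_left hinner hα.le]

/-- **Variational regularization, residual estimate.**
If `M xstar = ystar`, `M* η ∈ ∂Q(xstar)`, `‖yδ - ystar‖ ≤ δ` and `xad` minimizes
`x ↦ ½‖M x - yδ‖² + α Q x`, then `‖M xad - yδ‖ ≤ δ + 2 α ‖η‖`. -/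
theorem residual_estimate
    {X Y : Type*} [NormedAddCommGroup X] [InnerProductSpace ℝ X] [CompleteSpace X]
    [NormedAddCommGroup Y] [InnerProductSpace ℝ Y] [CompleteSpace Y]
    (M : X →L[ℝ] Y) (Q : X → ℝ≥0∞)
    (hproper : ∃ x, Q x ≠ ∞) (hconv : ConvexE Q) (hwlsc : WeakLSC Q)
    (xstar : X) (ystar : Y) (hsol : M xstar = ystar)
    (η : Y) (hsrc : IsSubgrad Q xstar (ContinuousLinearMap.adjoint M η))
    (δ α : ℝ) (hδ : 0 < δ) (hα : 0 < α)
    (yδ : Y) (hdata : ‖yδ - ystar‖ ≤ δ)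
    (xad : X)
    (hmin : ∀ x : X,
      ENNReal.ofReal (‖M xad - yδ‖ ^ 2 / 2) + ENNReal.ofReal α * Q xad ≤
        ENNReal.ofReal (‖M x - yδ‖ ^ 2 / 2) + ENNReal.ofReal α * Q x) :
    ‖M xad - yδ‖ ≤ δ + 2 * α * ‖η‖ :=
  residual_estimate_general M Q hproper xstar ystar hsol η hsrc δ α hα yδ hdata xad hmin
end
end

section
/- Let X, Y be real Hilbert spaces, M : X → Y a bounded linear operator, and Q : X → [0,∞] proper, convex and weakly lower semicontinuous. Suppose (x⋆, y⋆) ∈ X × Y satisfies M x⋆ = y⋆ and there exists η ∈ Y with M*η ∈ ∂Q(x⋆). Then for all δ, α > 0, all yδ ∈ Y with ‖yδ − y⋆‖ ≤ δ, and every minimizer xαδ of the functional x ↦ ½‖M x − yδ‖² + α Q(x), the Bregman distance satisfies D_{M*η}^{Q}(xαδ, x⋆) ≤ (δ + α‖η‖)² / (2α). -/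
open scoped ENNReal InnerProductSpace
open Filter

noncomputable section

/-- The Bregman distance `D_ξ^Q(x, xs) := Q(x) - Q(xs) - ⟪ξ, x - xs⟫`,
valued in the extended reals. -/
def Breg {X : Type*} [NormedAddCommGroup X] [InnerProductSpace ℝ X]
    (Q : X → ℝ≥0∞) (ξ xs x : X) : EReal :=
  (Q x : EReal) - (Q xs : EReal) - ((⟪ξ, x - xs⟫_ℝ : ℝ) : EReal)

/-!
Comparing the Tikhonov functional at `xad` and at `xstar`,
and writing `⟪M* η, xad - xstar⟫ = ⟪η, M xad - ystar⟫`, Cauchy–Schwarz and the triangle inequality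
bound `α D(xad, xstar)` by `δ²/2 - r²/2 + α‖η‖(r + δ)` with `r = ‖M xad - yδ‖`; maximising over
`r` gives `(δ + α‖η‖)²/2`. If `Q xstar = ∞` the Bregman distance is `⊥` in `EReal`.
-/

section Bregman

variable {X : Type*} [NormedAddCommGroup X] [InnerProductSpace ℝ X]

theorem Breg_eq_bot_of_eq_top {Q : X → ℝ≥0∞} {xs : X} (hQ : Q xs = ∞) (ξ x : X) :
    Breg Q ξ xs x = ⊥ := by
  simp [Breg, hQ]

theorem Breg_eq_coe_toReal {Q : X → ℝ≥0∞} {xs x : X} (hxs : Q xs ≠ ∞) (hx : Q x ≠ ∞) (ξ : X) :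
    Breg Q ξ xs x = (((Q x).toReal - (Q xs).toReal - ⟪ξ, x - xs⟫_ℝ : ℝ) : EReal) := by
  rw [Breg, ← EReal.coe_ennreal_toReal hxs, ← EReal.coe_ennreal_toReal hx, EReal.coe_sub,
    EReal.coe_sub]

end Bregman

theorem ENNReal.ne_top_and_le_of_ofReal_add_mul_le {a b α : ℝ} {p q : ℝ≥0∞}
    (ha : 0 ≤ a) (hb : 0 ≤ b) (hα : 0 < α) (hp : p ≠ ∞)
    (h : ENNReal.ofReal a + ENNReal.ofReal α * q ≤ ENNReal.ofReal b + ENNReal.ofReal α * p) :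
    q ≠ ∞ ∧ a + α * q.toReal ≤ b + α * p.toReal := by
  have hq : q ≠ ∞ := by
    intro hq
    have : ENNReal.ofReal α * q = ∞ := ENNReal.mul_eq_top.2 (.inl ⟨by simpa using hα, hq⟩)
    rw [this, add_top, top_le_iff] at h
    exact (show ENNReal.ofReal b + ENNReal.ofReal α * p ≠ ∞ by finiteness) h
  refine ⟨hq, ?_⟩
  rwa [← ENNReal.ofReal_toReal hp, ← ENNReal.ofReal_toReal hq, ← ENNReal.ofReal_mul hα.le,
    ← ENNReal.ofReal_mul hα.le, ← ENNReal.ofReal_add ha (by positivity),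
    ← ENNReal.ofReal_add hb (by positivity), ENNReal.ofReal_le_ofReal_iff (by positivity)] at h

theorem bregman_bound_of_tikhonov_le {X Y : Type*}
    [NormedAddCommGroup X] [InnerProductSpace ℝ X] [CompleteSpace X]
    [NormedAddCommGroup Y] [InnerProductSpace ℝ Y] [CompleteSpace Y]
    (M : X →L[ℝ] Y) {xstar xad : X} {ystar yδ η : Y} {δ α qad qstar : ℝ}
    (hsol : M xstar = ystar) (hdata : ‖yδ - ystar‖ ≤ δ) (hα : 0 < α)
    (hmin : ‖M xad - yδ‖ ^ 2 / 2 + α * qad ≤ ‖M xstar - yδ‖ ^ 2 / 2 + α * qstar) :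
    qad - qstar - ⟪ContinuousLinearMap.adjoint M η, xad - xstar⟫_ℝ ≤
      (δ + α * ‖η‖) ^ 2 / (2 * α) := by
  set r := ‖M xad - yδ‖
  have hinner : ⟪ContinuousLinearMap.adjoint M η, xad - xstar⟫_ℝ = ⟪η, M xad - ystar⟫_ℝ := by
    rw [ContinuousLinearMap.adjoint_inner_left, map_sub, hsol]
  have hcs : -⟪η, M xad - ystar⟫_ℝ ≤ ‖η‖ * (r + δ) := calc
    -⟪η, M xad - ystar⟫_ℝ ≤ ‖η‖ * ‖M xad - ystar‖ := by
      rw [← inner_neg_right, ← norm_neg (M xad - ystar)]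
      exact real_inner_le_norm _ _
    _ ≤ ‖η‖ * (r + δ) := by
      gcongr
      calc ‖M xad - ystar‖ ≤ r + ‖yδ - ystar‖ := norm_sub_le_norm_sub_add_norm_sub _ _ _
        _ ≤ r + δ := by gcongr
  have hresid : ‖M xstar - yδ‖ ≤ δ := by rwa [hsol, norm_sub_rev]
  have hδ : 0 ≤ δ := (norm_nonneg _).trans hdata
  rw [hinner, le_div_iff₀ (by positivity)]
  nlinarith [sq_nonneg (r - α * ‖η‖), mul_le_mul_of_nonneg_left hcs hα.le,
    mul_le_mul hresid hresid (norm_nonneg _) hδ]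

theorem bregman_estimate_general
    {X Y : Type*} [NormedAddCommGroup X] [InnerProductSpace ℝ X] [CompleteSpace X]
    [NormedAddCommGroup Y] [InnerProductSpace ℝ Y] [CompleteSpace Y]
    (M : X →L[ℝ] Y) (Q : X → ℝ≥0∞)
    (xstar : X) (ystar : Y) (hsol : M xstar = ystar)
    (η : Y)
    (δ α : ℝ) (hα : 0 < α)
    (yδ : Y) (hdata : ‖yδ - ystar‖ ≤ δ)
    (xad : X)
    (hmin : ∀ x : X,
      ENNReal.ofReal (‖M xad - yδ‖ ^ 2 / 2) + ENNReal.ofReal α * Q xad ≤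
        ENNReal.ofReal (‖M x - yδ‖ ^ 2 / 2) + ENNReal.ofReal α * Q x) :
    Breg Q (ContinuousLinearMap.adjoint M η) xstar xad ≤
      (((δ + α * ‖η‖) ^ 2 / (2 * α) : ℝ) : EReal) := by
  by_cases hstar : Q xstar = ∞
  · exact (Breg_eq_bot_of_eq_top hstar _ _).trans_le bot_le
  obtain ⟨had, hminR⟩ :=
    ENNReal.ne_top_and_le_of_ofReal_add_mul_le (by positivity) (by positivity) hα hstar (hmin xstar)
  rw [Breg_eq_coe_toReal hstar had, EReal.coe_le_coe_iff]
  exact bregman_bound_of_tikhonov_le M hsol hdata hα hminR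

/-- **Variational regularization, Bregman distance estimate.**
If `M xstar = ystar`, `M* η ∈ ∂Q(xstar)`, `‖yδ - ystar‖ ≤ δ` and `xad` minimizes
`x ↦ ½‖M x - yδ‖² + α Q x`, then `D_{M*η}^Q(xad, xstar) ≤ (δ + α‖η‖)² / (2α)`. -/
theorem bregman_estimate
    {X Y : Type*} [NormedAddCommGroup X] [InnerProductSpace ℝ X] [CompleteSpace X]
    [NormedAddCommGroup Y] [InnerProductSpace ℝ Y] [CompleteSpace Y]
    (M : X →L[ℝ] Y) (Q : X → ℝ≥0∞)
    (hproper : ∃ x, Q x ≠ ∞) (hconv : ConvexE Q) (hwlsc : WeakLSC Q)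
    (xstar : X) (ystar : Y) (hsol : M xstar = ystar)
    (η : Y) (hsrc : IsSubgrad Q xstar (ContinuousLinearMap.adjoint M η))
    (δ α : ℝ) (hδ : 0 < δ) (hα : 0 < α)
    (yδ : Y) (hdata : ‖yδ - ystar‖ ≤ δ)
    (xad : X)
    (hmin : ∀ x : X,
      ENNReal.ofReal (‖M xad - yδ‖ ^ 2 / 2) + ENNReal.ofReal α * Q xad ≤
        ENNReal.ofReal (‖M x - yδ‖ ^ 2 / 2) + ENNReal.ofReal α * Q x) :
    Breg Q (ContinuousLinearMap.adjoint M η) xstar xad ≤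
      (((δ + α * ‖η‖) ^ 2 / (2 * α) : ℝ) : EReal) :=
  bregman_estimate_general M Q xstar ystar hsol η δ α hα yδ hdata xad hmin
end
end

section
/- Let H be a separable real Hilbert space with orthonormal basis (φ_λ)_{λ∈Λ} over a countable index set Λ, and let (κ_λ)_{λ∈Λ} be weights with κ_λ ≥ a > 0 for all λ. For h⋆ ∈ H with ‖h⋆‖_{1,κ} < ∞, the subdifferential ∂‖h⋆‖_{1,κ} of the weighted ℓ¹-norm at h⋆ is nonempty if and only if h⋆ is sparse, i.e. supp(h⋆) is finite. -/
/-!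
If `η` is a subgradient of `‖·‖_{1,κ}` at `h⋆` and `⟪φ_λ, h⋆⟫ ≠ 0`, testing the subgradient
inequality at `h⋆` with its `λ`-th coefficient removed gives `a ≤ κ_λ ≤ |⟪φ_λ, η⟫|`. By Bessel's
inequality only finitely many coefficients of `η` have size at least `a > 0`, so `supp(h⋆)` is
finite. Conversely, for sparse `h⋆` the finite sum `Σ_{λ ∈ supp(h⋆)} κ_λ sign⟪φ_λ, h⋆⟫ φ_λ` is a
subgradient, coordinate by coordinate.
-/

open scoped ENNReal InnerProductSpace

noncomputable section

/-- The weighted ℓ¹-norm `‖h‖_{1,κ} = Σ_λ κ_λ |⟪φ_λ, h⟫|` with respect to an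
orthonormal basis `φ` of `H`, valued in `[0,∞]`. -/
def WNorm1 {H : Type*} [NormedAddCommGroup H] [InnerProductSpace ℝ H] {Λ : Type*}
    (φ : HilbertBasis Λ ℝ H) (κ : Λ → ℝ) (h : H) : ℝ≥0∞ :=
  ∑' l, ENNReal.ofReal (κ l * |⟪φ l, h⟫_ℝ|)

lemma EReal.coe_ennreal_add_coe_le_coe_ennreal_iff {p q : ℝ≥0∞} (hp : p ≠ ∞) (hq : q ≠ ∞)
    (r : ℝ) : (p : EReal) + r ≤ q ↔ p.toReal + r ≤ q.toReal := by
  rw [← EReal.coe_ennreal_toReal hp, ← EReal.coe_ennreal_toReal hq, ← EReal.coe_add,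
    EReal.coe_le_coe_iff]

lemma sign_mul_le_abs {α : Type*} [Ring α] [LinearOrder α] [IsStrictOrderedRing α] (x y : α) :
    (SignType.sign x : α) * y ≤ |y| := by
  rcases lt_trichotomy x 0 with hx | rfl | hx <;> simp [*, neg_le_abs, le_abs_self]

theorem Orthonormal.finite_setOf_le_norm_inner {𝕜 E ι : Type*} [RCLike 𝕜] [NormedAddCommGroup E]
    [InnerProductSpace 𝕜 E] {v : ι → E} (hv : Orthonormal 𝕜 v) (x : E) {a : ℝ} (ha : 0 < a) :
    {i | a ≤ ‖⟪v i, x⟫_𝕜‖}.Finite := by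
  have hsmall : ∀ᶠ i in Filter.cofinite, ‖⟪v i, x⟫_𝕜‖ ^ 2 < a ^ 2 :=
    (hv.inner_products_summable (x := x)).tendsto_cofinite_zero.eventually
      (gt_mem_nhds (by positivity))
  exact (Filter.eventually_cofinite.1 hsmall).subset fun i hi =>
    not_lt.2 (pow_le_pow_left₀ ha.le hi 2)

section WNorm1

variable {H Λ : Type*} [NormedAddCommGroup H] [InnerProductSpace ℝ H]
  (φ : HilbertBasis Λ ℝ H) {κ : Λ → ℝ}

lemma HilbertBasis.inner_sub_smul_inner_self [DecidableEq Λ] (l m : Λ) (h : H) :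
    ⟪φ m, h - ⟪φ l, h⟫_ℝ • φ l⟫_ℝ = if m = l then 0 else ⟪φ m, h⟫_ℝ := by
  rw [inner_sub_right, real_inner_smul_right, orthonormal_iff_ite.1 φ.orthonormal m l]
  split_ifs with hml
  · subst hml; ring
  · ring

variable (κ) in
lemma WNorm1_eq_add_sub_smul (l : Λ) (h : H) :
    WNorm1 φ κ h =
      ENNReal.ofReal (κ l * |⟪φ l, h⟫_ℝ|) + WNorm1 φ κ (h - ⟪φ l, h⟫_ℝ • φ l) := by
  classical
  rw [WNorm1, ENNReal.tsum_eq_add_tsum_ite l, WNorm1]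
  congr 1
  refine tsum_congr fun m => ?_
  rw [φ.inner_sub_smul_inner_self]
  split_ifs <;> simp

lemma le_abs_inner_of_isSubgrad_WNorm1 {h η : H} (hfin : WNorm1 φ κ h ≠ ∞)
    (hη : IsSubgrad (WNorm1 φ κ) h η) {l : Λ} (hl : ⟪φ l, h⟫_ℝ ≠ 0) :
    κ l ≤ |⟪φ l, η⟫_ℝ| := by
  set c := ⟪φ l, h⟫_ℝ
  have hsplit := WNorm1_eq_add_sub_smul φ κ l h
  set x := h - c • φ l
  have hxfin : WNorm1 φ κ x ≠ ∞ := fun hx => hfin (by simp [hsplit, hx])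
  have htest := hη x
  rw [show x - h = -(c • φ l) by simp [x], inner_neg_right, real_inner_smul_right,
    EReal.coe_ennreal_add_coe_le_coe_ennreal_iff hfin hxfin, hsplit,
    ENNReal.toReal_add ENNReal.ofReal_ne_top hxfin, ENNReal.toReal_ofReal'] at htest
  have hbound : κ l * |c| ≤ |⟪φ l, η⟫_ℝ| * |c| :=
    calc κ l * |c| ≤ c * ⟪η, φ l⟫_ℝ := by linarith [le_max_left (κ l * |c|) 0]
      _ ≤ |c * ⟪η, φ l⟫_ℝ| := le_abs_self _
      _ = |⟪φ l, η⟫_ℝ| * |c| := by rw [abs_mul, real_inner_comm, mul_comm]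
  exact le_of_mul_le_mul_right hbound (abs_pos.2 hl)

lemma sum_le_WNorm1_toReal (hκ : ∀ l, 0 ≤ κ l) {x : H} (hx : WNorm1 φ κ x ≠ ∞)
    (S : Finset Λ) : ∑ l ∈ S, κ l * |⟪φ l, x⟫_ℝ| ≤ (WNorm1 φ κ x).toReal := by
  have hle := ENNReal.toReal_mono hx
    (ENNReal.sum_le_tsum S (f := fun l => ENNReal.ofReal (κ l * |⟪φ l, x⟫_ℝ|)))
  rwa [ENNReal.toReal_sum fun l _ => ENNReal.ofReal_ne_top,
    Finset.sum_congr rfl fun l _ => ENNReal.toReal_ofReal (by have := hκ l; positivity)] at hle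

lemma WNorm1_toReal_eq_sum (hκ : ∀ l, 0 ≤ κ l) {h : H} {S : Finset Λ}
    (hS : ∀ l ∉ S, ⟪φ l, h⟫_ℝ = 0) :
    (WNorm1 φ κ h).toReal = ∑ l ∈ S, κ l * |⟪φ l, h⟫_ℝ| := by
  rw [WNorm1, tsum_eq_sum fun l hl => by simp [hS l hl],
    ENNReal.toReal_sum fun l _ => ENNReal.ofReal_ne_top]
  exact Finset.sum_congr rfl fun l _ => ENNReal.toReal_ofReal (by have := hκ l; positivity)

lemma isSubgrad_WNorm1_of_finite (hκ : ∀ l, 0 ≤ κ l) {h : H} (hfin : WNorm1 φ κ h ≠ ∞)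
    (hS : {l | ⟪φ l, h⟫_ℝ ≠ 0}.Finite) :
    IsSubgrad (WNorm1 φ κ) h
      (∑ l ∈ hS.toFinset, (κ l * SignType.sign ⟪φ l, h⟫_ℝ) • φ l) := by
  intro x
  by_cases hx : WNorm1 φ κ x = ∞
  · simp [hx]
  rw [EReal.coe_ennreal_add_coe_le_coe_ennreal_iff hfin hx,
    WNorm1_toReal_eq_sum φ hκ (S := hS.toFinset) fun l hl => by simpa using hl, sum_inner,
    ← Finset.sum_add_distrib]
  refine (Finset.sum_le_sum fun l _ => ?_).trans (sum_le_WNorm1_toReal φ hκ hx _)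
  rw [real_inner_smul_left, inner_sub_right]
  calc κ l * |⟪φ l, h⟫_ℝ| + κ l * SignType.sign ⟪φ l, h⟫_ℝ * (⟪φ l, x⟫_ℝ - ⟪φ l, h⟫_ℝ)
      = κ l * (SignType.sign ⟪φ l, h⟫_ℝ * ⟪φ l, x⟫_ℝ) := by rw [← sign_mul_self]; ring
    _ ≤ κ l * |⟪φ l, x⟫_ℝ| := mul_le_mul_of_nonneg_left (sign_mul_le_abs _ _) (hκ l)

end WNorm1

theorem subdifferential_nonempty_iff_sparse_general
    {H : Type*} [NormedAddCommGroup H] [InnerProductSpace ℝ H]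
    {Λ : Type*} (φ : HilbertBasis Λ ℝ H)
    (κ : Λ → ℝ) (a : ℝ) (ha : 0 < a) (hκ : ∀ l, a ≤ κ l)
    (hstar : H) (hfin : WNorm1 φ κ hstar ≠ ∞) :
    (∃ η : H, IsSubgrad (WNorm1 φ κ) hstar η) ↔
      {l : Λ | ⟪φ l, hstar⟫_ℝ ≠ 0}.Finite := by
  constructor
  · rintro ⟨η, hη⟩
    refine (φ.orthonormal.finite_setOf_le_norm_inner η ha).subset fun l hl => ?_
    rw [Set.mem_ofPred_eq, Real.norm_eq_abs]
    exact (hκ l).trans (le_abs_inner_of_isSubgrad_WNorm1 φ hfin hη hl)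
  · exact fun hS => ⟨_, isSubgrad_WNorm1_of_finite φ (fun l => ha.le.trans (hκ l)) hfin hS⟩

/-- **Nonemptiness of the ℓ¹ subdifferential and sparsity.**
The subdifferential `∂‖hstar‖_{1,κ}` is nonempty iff `hstar` is sparse, i.e.
`supp(hstar) = {λ : ⟪φ_λ, hstar⟫ ≠ 0}` is finite. -/
theorem subdifferential_nonempty_iff_sparse
    {H : Type*} [NormedAddCommGroup H] [InnerProductSpace ℝ H] [CompleteSpace H]
    {Λ : Type*} [Countable Λ] (φ : HilbertBasis Λ ℝ H)
    (κ : Λ → ℝ) (a : ℝ) (ha : 0 < a) (hκ : ∀ l, a ≤ κ l)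
    (hstar : H) (hfin : WNorm1 φ κ hstar ≠ ∞) :
    (∃ η : H, IsSubgrad (WNorm1 φ κ) hstar η) ↔
      {l : Λ | ⟪φ l, hstar⟫_ℝ ≠ 0}.Finite :=
  subdifferential_nonempty_iff_sparse_general φ κ a ha hκ hstar hfin
end
end

section
/- Let H, Y be real Hilbert spaces, (φ_λ)_{λ∈Λ} an orthonormal basis of H over a countable index set Λ, and A : H → Y a bounded linear operator. Let Ω ⊆ Λ be finite, suppose the restriction A_Ω of A to H_Ω := span{φ_λ : λ ∈ Ω} is injective, and let h⋆ ∈ H_Ω. Then for all h ∈ H: ‖h − h⋆‖ ≤ ‖A_Ω⁻¹‖ · ‖A h − A h⋆‖ + (1 + ‖A_Ω⁻¹‖ · ‖A‖) · Σ_{λ∉Ω} |⟨φ_λ, h⟩|. -/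
open scoped ENNReal InnerProductSpace

/-
Let `g = Σ_{λ ∈ Ω} ⟪φ_λ, h⟫ φ_λ` be the truncated expansion of `h`. Since `g - h⋆ ∈ H_Ω`, the
inverse bound gives `‖g - h⋆‖ ≤ K ‖A h - A h⋆‖ + K ‖A‖ ‖h - g‖`, and the triangle inequality
through `g` leaves `(1 + K ‖A‖) ‖h - g‖`, where `‖h - g‖` is at most the ℓ¹ norm of the
coefficients off `Ω`. The tail sum is taken in `ℝ≥0∞`, so it may be infinite.
-/

theorem norm_sub_le_of_norm_le_mul_norm_on {𝕜 E F : Type*} [NontriviallyNormedField 𝕜]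
    [SeminormedAddCommGroup E] [NormedSpace 𝕜 E] [SeminormedAddCommGroup F] [NormedSpace 𝕜 F]
    (A : E →L[𝕜] F) (S : Submodule 𝕜 E) {K : ℝ} (hK : 0 ≤ K)
    (hA : ∀ v ∈ S, ‖v‖ ≤ K * ‖A v‖) {g y : E} (hg : g ∈ S) (hy : y ∈ S) (x : E) :
    ‖x - y‖ ≤ K * ‖A x - A y‖ + (1 + K * ‖A‖) * ‖x - g‖ := by
  have hAgy : ‖A (g - y)‖ ≤ ‖A x - A y‖ + ‖A‖ * ‖x - g‖ := calc
    ‖A (g - y)‖ = ‖(A x - A y) - A (x - g)‖ := by rw [map_sub, map_sub, sub_sub_sub_cancel_left]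
    _ ≤ ‖A x - A y‖ + ‖A‖ * ‖x - g‖ := (norm_sub_le _ _).trans (by gcongr; exact A.le_opNorm _)
  calc ‖x - y‖ ≤ ‖x - g‖ + ‖g - y‖ := norm_sub_le_norm_sub_add_norm_sub x g y
    _ ≤ ‖x - g‖ + K * (‖A x - A y‖ + ‖A‖ * ‖x - g‖) := by
      gcongr
      exact (hA _ (S.sub_mem hg hy)).trans (by gcongr)
    _ = K * ‖A x - A y‖ + (1 + K * ‖A‖) * ‖x - g‖ := by ring

namespace HilbertBasis

variable {ι 𝕜 E : Type*} [RCLike 𝕜] [NormedAddCommGroup E] [InnerProductSpace 𝕜 E]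

theorem sum_inner_smul_mem_span (b : HilbertBasis ι 𝕜 E) (s : Finset ι) (x : E) :
    ∑ i ∈ s, ⟪b i, x⟫_𝕜 • b i ∈ Submodule.span 𝕜 ((fun i => b i) '' s) :=
  Submodule.sum_smul_mem _ _ fun i hi => Submodule.subset_span ⟨i, hi, rfl⟩

theorem enorm_sub_sum_inner_smul_le (b : HilbertBasis ι 𝕜 E) (s : Finset ι) (x : E) :
    ‖x - ∑ i ∈ s, ⟪b i, x⟫_𝕜 • b i‖ₑ ≤ ∑' i : {i // i ∉ s}, ‖⟪b i, x⟫_𝕜‖ₑ := by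
  have htail : HasSum (fun i : {i // i ∉ s} => ⟪b i, x⟫_𝕜 • b i)
      (x - ∑ i ∈ s, ⟪b i, x⟫_𝕜 • b i) := by
    simpa only [b.repr_apply_apply] using (s.hasSum_iff_compl).1 (b.hasSum_repr x)
  rw [← htail.tsum_eq]
  refine enorm_tsum_le_tsum_enorm.trans_eq (tsum_congr fun i => ?_)
  rw [enorm_smul, ← ofReal_norm (b i), b.orthonormal.1, ENNReal.ofReal_one, mul_one]

end HilbertBasis

theorem normbound_general
    {H Y : Type*} [NormedAddCommGroup H] [InnerProductSpace ℝ H]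
    [NormedAddCommGroup Y] [InnerProductSpace ℝ Y]
    {Λ : Type*} (φ : HilbertBasis Λ ℝ H)
    (A : H →L[ℝ] Y) (Ω : Set Λ) (hΩ : Ω.Finite)
    (K : ℝ) (hK0 : 0 ≤ K)
    (hKinv : ∀ g ∈ (Submodule.span ℝ ((fun l => φ l) '' Ω) : Set H), ‖g‖ ≤ K * ‖A g‖)
    (hstar : H) (hstarmem : hstar ∈ (Submodule.span ℝ ((fun l => φ l) '' Ω) : Set H))
    (h : H) :
    ENNReal.ofReal ‖h - hstar‖ ≤
      ENNReal.ofReal (K * ‖A h - A hstar‖) +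
        ENNReal.ofReal (1 + K * ‖A‖) *
          ∑' l : {l : Λ // l ∉ Ω}, ENNReal.ofReal |⟪φ l.1, h⟫_ℝ| := by
  lift Ω to Finset Λ using hΩ
  set g := ∑ l ∈ Ω, ⟪φ l, h⟫_ℝ • φ l
  have hreal : ‖h - hstar‖ ≤ K * ‖A h - A hstar‖ + (1 + K * ‖A‖) * ‖h - g‖ :=
    norm_sub_le_of_norm_le_mul_norm_on A _ hK0 hKinv (φ.sum_inner_smul_mem_span Ω h) hstarmem h
  have htail : ENNReal.ofReal ‖h - g‖ ≤ ∑' l : {l : Λ // l ∉ Ω}, ENNReal.ofReal |⟪φ l, h⟫_ℝ| := by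
    simpa only [ofReal_norm, Real.enorm_eq_ofReal_abs] using φ.enorm_sub_sum_inner_smul_le Ω h
  calc ENNReal.ofReal ‖h - hstar‖
      ≤ ENNReal.ofReal (K * ‖A h - A hstar‖ + (1 + K * ‖A‖) * ‖h - g‖) :=
        ENNReal.ofReal_le_ofReal hreal
    _ = ENNReal.ofReal (K * ‖A h - A hstar‖) +
          ENNReal.ofReal (1 + K * ‖A‖) * ENNReal.ofReal ‖h - g‖ := by
        rw [ENNReal.ofReal_add (by positivity) (by positivity),
          ENNReal.ofReal_mul (by positivity : 0 ≤ 1 + K * ‖A‖)]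
    _ ≤ _ := by gcongr; exact htail

/-- **Norm bound via restricted injectivity (Lemma `normbound`).**
Let `Ω ⊆ Λ` be finite, let the restriction `A_Ω` of `A` to
`H_Ω = span {φ_λ : λ ∈ Ω}` be injective, and let `hstar ∈ H_Ω`.  If `K ≥ 0`
bounds the inverse of `A_Ω` (i.e. `‖g‖ ≤ K ‖A g‖` on `H_Ω`; the operator norm
`‖A_Ω⁻¹‖` is the least such `K`), then for all `h ∈ H`
`‖h - hstar‖ ≤ K ‖A h - A hstar‖ + (1 + K ‖A‖) Σ_{λ ∉ Ω} |⟪φ_λ, h⟫|`. -/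
theorem normbound
    {H Y : Type*} [NormedAddCommGroup H] [InnerProductSpace ℝ H] [CompleteSpace H]
    [NormedAddCommGroup Y] [InnerProductSpace ℝ Y] [CompleteSpace Y]
    {Λ : Type*} [Countable Λ] (φ : HilbertBasis Λ ℝ H)
    (A : H →L[ℝ] Y) (Ω : Set Λ) (hΩ : Ω.Finite)
    (hinj : Set.InjOn A (Submodule.span ℝ ((fun l => φ l) '' Ω) : Set H))
    (K : ℝ) (hK0 : 0 ≤ K)
    (hKinv : ∀ g ∈ (Submodule.span ℝ ((fun l => φ l) '' Ω) : Set H), ‖g‖ ≤ K * ‖A g‖)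
    (hstar : H) (hstarmem : hstar ∈ (Submodule.span ℝ ((fun l => φ l) '' Ω) : Set H))
    (h : H) :
    ENNReal.ofReal ‖h - hstar‖ ≤
      ENNReal.ofReal (K * ‖A h - A hstar‖) +
        ENNReal.ofReal (1 + K * ‖A‖) *
          ∑' l : {l : Λ // l ∉ Ω}, ENNReal.ofReal |⟪φ l.1, h⟫_ℝ| :=
  normbound_general φ A Ω hΩ K hK0 hKinv hstar hstarmem h
end

section
/- Let H, Y be real Hilbert spaces, (φ_λ)_{λ∈Λ} an orthonormal basis of H over a countable index set Λ, (κ_λ)_{λ∈Λ} weights with κ_λ ≥ a > 0, and A : H → Y a bounded linear operator. Let h⋆ ∈ H be sparse, η ∈ ∂‖h⋆‖_{1,κ}, and assume the restriction A_{Ω[η]} of A to H_{Ω[η]} := span{φ_λ : λ ∈ Ω[η]} is injective, where Ω[η] := {λ : |⟨φ_λ, η⟩| = κ_λ}. Then for all h ∈ H: ‖h − h⋆‖ ≤ ‖A_{Ω[η]}⁻¹‖ · ‖A h − A h⋆‖ + ((1 + ‖A_{Ω[η]}⁻¹‖ · ‖A‖)/m[η]) · D_η^{‖·‖_{1,κ}}(h,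 h⋆), where m[η] := inf{κ_λ − |⟨φ_λ, η⟩| : λ ∉ Ω[η]}. -/
open scoped ENNReal InnerProductSpace

noncomputable section

/-!
Testing the subgradient inequality on `h⋆ + t φ_λ` shows that `η_λ := ⟪φ_λ, η⟫` is a
subgradient of `κ_λ |·|` at `h⋆_λ := ⟪φ_λ, h⋆⟫`: so `|η_λ| ≤ κ_λ`, and `h⋆_λ = 0` for
`λ ∉ Ω[η]`. The Bregman distance is the sum of the nonnegative terms
`κ_λ |h_λ| - κ_λ |h⋆_λ| - η_λ (h_λ - h⋆_λ)`, and for `λ ∉ Ω[η]` such a term is at least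
`m[η] |h_λ - h⋆_λ|`. Hence the part `v` of `h - h⋆` off `Ω[η]` has `‖v‖ ≤ D / m[η]` (its ℓ¹
norm bounds its norm), while `u = h - h⋆ - v` lies in the closure of `H_{Ω[η]}`, where
`‖u‖ ≤ K ‖A u‖ ≤ K (‖A (h - h⋆)‖ + ‖A‖ ‖v‖)`. Finally `m[η] > 0`: since `η_λ → 0`, only
finitely many gaps `κ_λ - |η_λ|` can be below `a / 2`.
-/

open Filter Topology

section SubgradientAbs

variable {κ b e : ℝ}

theorem abs_le_of_subgradient_abs (hκ : 0 ≤ κ) (hsub : ∀ s, κ * |b| + e * (s - b) ≤ κ * |s|) :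
    |e| ≤ κ := by
  have hstep := hsub (b + e)
  rw [add_sub_cancel_left] at hstep
  have hadd : κ * |b + e| ≤ κ * |b| + κ * |e| := by
    rw [← mul_add]; exact mul_le_mul_of_nonneg_left (abs_add_le b e) hκ
  nlinarith [abs_mul_abs_self e, abs_nonneg e]

theorem mul_eq_of_subgradient_abs (hκ : 0 ≤ κ) (hsub : ∀ s, κ * |b| + e * (s - b) ≤ κ * |s|) :
    e * b = κ * |b| := by
  have hzero := hsub 0
  have hle : e * b ≤ κ * |b| := calc
    e * b ≤ |e| * |b| := (le_abs_self _).trans (abs_mul e b).le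
    _ ≤ κ * |b| := by gcongr; exact abs_le_of_subgradient_abs hκ hsub
  simp only [abs_zero, mul_zero, zero_sub] at hzero
  linarith

theorem eq_zero_of_subgradient_abs (hκ : 0 ≤ κ) (hsub : ∀ s, κ * |b| + e * (s - b) ≤ κ * |s|)
    (he : |e| ≠ κ) : b = 0 := by
  have hlt : |e| < κ := (abs_le_of_subgradient_abs hκ hsub).lt_of_ne he
  have hmul : κ * |b| ≤ |e| * |b| := by
    rw [← mul_eq_of_subgradient_abs hκ hsub, ← abs_mul]; exact le_abs_self _
  have : |b| ≤ 0 := by nlinarith [abs_nonneg b]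
  exact abs_nonpos_iff.mp this

end SubgradientAbs

theorem IsSubgrad.ne_top_s7 {X : Type*} [NormedAddCommGroup X] [InnerProductSpace ℝ X]
    {Q : X → ℝ≥0∞} {xs ξ : X} (hsub : IsSubgrad Q xs ξ) {x : X} (hx : Q x ≠ ⊤) : Q xs ≠ ⊤ := by
  intro htop
  have := hsub x
  rw [htop, EReal.coe_ennreal_top, EReal.top_add_coe, top_le_iff] at this
  exact hx (EReal.coe_ennreal_eq_top_iff.mp this)

theorem Breg_eq_top {X : Type*} [NormedAddCommGroup X] [InnerProductSpace ℝ X]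
    {Q : X → ℝ≥0∞} {ξ xs x : X} (hxs : Q xs ≠ ⊤) (hx : Q x = ⊤) : Breg Q ξ xs x = ⊤ := by
  rw [Breg, hx, ← EReal.coe_ennreal_toReal hxs, EReal.coe_ennreal_top, EReal.top_sub_coe,
    EReal.top_sub_coe]

namespace HilbertBasis

variable {H : Type*} [NormedAddCommGroup H] [InnerProductSpace ℝ H] {Λ : Type*}
  (φ : HilbertBasis Λ ℝ H)

theorem tendsto_inner_cofinite_zero (x : H) :
    Tendsto (fun l => ⟪φ l, x⟫_ℝ) cofinite (𝓝 0) := by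
  have hsq : Tendsto (fun l => ⟪φ l, x⟫_ℝ * ⟪φ l, x⟫_ℝ) cofinite (𝓝 0) := by
    simpa only [real_inner_comm x] using (φ.summable_inner_mul_inner x x).tendsto_cofinite_zero
  have habs := (Real.continuous_sqrt.tendsto 0).comp hsq
  simp only [Function.comp_def, Real.sqrt_mul_self_eq_abs, Real.sqrt_zero] at habs
  exact (tendsto_zero_iff_abs_tendsto_zero _).mpr habs

theorem mem_closure_span_of_inner_eq_zero {Ω : Set Λ} {g : H} (hg : ∀ l ∉ Ω, ⟪φ l, g⟫_ℝ = 0) :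
    g ∈ closure (Submodule.span ℝ ((fun l => φ l) '' Ω) : Set H) := by
  refine mem_closure_of_tendsto (φ.hasSum_repr g) (Eventually.of_forall fun s =>
    Submodule.sum_mem _ fun l _ => ?_)
  by_cases hl : l ∈ Ω
  · exact Submodule.smul_mem _ _ (Submodule.subset_span ⟨l, hl, rfl⟩)
  · simp [φ.repr_apply_apply, hg l hl]

theorem norm_le_mul_norm_apply_of_inner_eq_zero {Y : Type*} [NormedAddCommGroup Y]
    [NormedSpace ℝ Y] (A : H →L[ℝ] Y) {Ω : Set Λ} {K : ℝ}
    (hK : ∀ g ∈ (Submodule.span ℝ ((fun l => φ l) '' Ω) : Set H), ‖g‖ ≤ K * ‖A g‖)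
    (g : H) (hg : ∀ l ∉ Ω, ⟪φ l, g⟫_ℝ = 0) : ‖g‖ ≤ K * ‖A g‖ :=
  closure_minimal hK (isClosed_le continuous_norm (continuous_const.mul A.continuous.norm))
    (φ.mem_closure_span_of_inner_eq_zero hg)

theorem exists_norm_le_of_hasSum_indicator (x : H) (N : Set Λ) {S : ℝ}
    (hS : HasSum (N.indicator fun l => |⟪φ l, x⟫_ℝ|) S) :
    ∃ v : H, ‖v‖ ≤ S ∧ ∀ l ∈ N, ⟪φ l, x - v⟫_ℝ = 0 := by
  let w : lp (fun _ : Λ => ℝ) 2 := ⟨N.indicator (φ.repr x), (φ.repr x).2.mono' fun l =>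
    norm_indicator_le_norm_self _ l⟩
  have hw : ∀ l, w l = N.indicator (φ.repr x) l := fun _ => rfl
  refine ⟨φ.repr.symm w, (φ.hasSum_repr_symm w).norm_le_of_bounded hS fun l => ?_,
    fun l hl => ?_⟩
  · by_cases hl : l ∈ N <;> simp [hw, hl, norm_smul, φ.orthonormal.1 l, φ.repr_apply_apply]
  · rw [inner_sub_right, ← φ.repr_apply_apply, ← φ.repr_apply_apply,
      LinearIsometryEquiv.apply_symm_apply, hw, Set.indicator_of_mem hl, sub_self]

end HilbertBasis

theorem norm_add_le_of_norm_le_mul_norm_apply {𝕜 E F : Type*} [NontriviallyNormedField 𝕜]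
    [SeminormedAddCommGroup E] [NormedSpace 𝕜 E] [SeminormedAddCommGroup F] [NormedSpace 𝕜 F]
    (A : E →L[𝕜] F) {K : ℝ} (hK : 0 ≤ K) {u v : E} (hu : ‖u‖ ≤ K * ‖A u‖) :
    ‖u + v‖ ≤ K * ‖A (u + v)‖ + (1 + K * ‖A‖) * ‖v‖ := by
  have hAu : ‖A u‖ ≤ ‖A (u + v)‖ + ‖A‖ * ‖v‖ := calc
    ‖A u‖ = ‖A (u + v) - A v‖ := by rw [map_add, add_sub_cancel_right]
    _ ≤ ‖A (u + v)‖ + ‖A v‖ := norm_sub_le _ _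
    _ ≤ ‖A (u + v)‖ + ‖A‖ * ‖v‖ := by gcongr; exact A.le_opNorm v
  calc ‖u + v‖ ≤ ‖u‖ + ‖v‖ := norm_add_le u v
    _ ≤ K * (‖A (u + v)‖ + ‖A‖ * ‖v‖) + ‖v‖ := by gcongr; exact hu.trans (by gcongr)
    _ = K * ‖A (u + v)‖ + (1 + K * ‖A‖) * ‖v‖ := by ring

theorem sInf_image_sub_abs_pos {Λ : Type*} {κ e : Λ → ℝ} {a : ℝ} (ha : 0 < a)
    (hκ : ∀ l, a ≤ κ l) (he : Tendsto e cofinite (𝓝 0)) (hle : ∀ l, |e l| ≤ κ l)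
    (hne : ∃ l, |e l| ≠ κ l) :
    0 < sInf ((fun l => κ l - |e l|) '' {l | |e l| ≠ κ l}) := by
  have hfin : {l | a / 2 ≤ |e l| ∧ |e l| ≠ κ l}.Finite := by
    refine (eventually_cofinite.mp ((tendsto_zero_iff_abs_tendsto_zero e).mp he
      |>.eventually_lt_const (half_pos ha))).subset fun l hl => ?_
    exact not_lt.mpr hl.1
  obtain ⟨c, hc, hcle⟩ : ∃ c > 0, ∀ l ∈ {l | a / 2 ≤ |e l| ∧ |e l| ≠ κ l}, c ≤ κ l - |e l| := by
    rcases Set.eq_empty_or_nonempty {l | a / 2 ≤ |e l| ∧ |e l| ≠ κ l} with hemp | hnon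
    · exact ⟨1, one_pos, by simp [hemp]⟩
    obtain ⟨l₀, hl₀, hmin⟩ := Set.exists_min_image _ (fun l => κ l - |e l|) hfin hnon
    exact ⟨_, sub_pos.mpr ((hle l₀).lt_of_ne hl₀.2), hmin⟩
  obtain ⟨l, hl⟩ := hne
  refine (lt_min hc (half_pos ha)).trans_le (le_csInf ⟨_, l, hl, rfl⟩ ?_)
  rintro _ ⟨l, hl, rfl⟩
  by_cases hbig : a / 2 ≤ |e l|
  · exact (min_le_left _ _).trans (hcle l ⟨hbig, hl⟩)
  · linarith [min_le_right c (a / 2), hκ l]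

section WNorm1

variable {H : Type*} [NormedAddCommGroup H] [InnerProductSpace ℝ H] {Λ : Type*}
  (φ : HilbertBasis Λ ℝ H) {κ : Λ → ℝ}

theorem coe_WNorm1_of_hasSum (hκ : ∀ l, 0 ≤ κ l) {g : H} {r : ℝ}
    (hg : HasSum (fun l => κ l * |⟪φ l, g⟫_ℝ|) r) : (WNorm1 φ κ g : EReal) = r := by
  have hnn : ∀ l, 0 ≤ κ l * |⟪φ l, g⟫_ℝ| := fun l => mul_nonneg (hκ l) (abs_nonneg _)
  rw [WNorm1, ← ENNReal.ofReal_tsum_of_nonneg hnn hg.summable, hg.tsum_eq,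
    EReal.coe_ennreal_ofReal, max_eq_left (hg.nonneg hnn)]

theorem summable_of_WNorm1_ne_top (hκ : ∀ l, 0 ≤ κ l) {g : H} (hg : WNorm1 φ κ g ≠ ⊤) :
    Summable fun l => κ l * |⟪φ l, g⟫_ℝ| := by
  simpa [ENNReal.toReal_ofReal (mul_nonneg (hκ _) (abs_nonneg _))] using
    ENNReal.summable_toReal hg

theorem IsSubgrad.WNorm1_ne_top {hstar η : H} (hsub : IsSubgrad (WNorm1 φ κ) hstar η) :
    WNorm1 φ κ hstar ≠ ⊤ :=
  hsub.ne_top_s7 (x := 0) (by simp [WNorm1])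

theorem exists_hasSum_Breg_WNorm1 (hκ : ∀ l, 0 ≤ κ l) {η hstar h : H}
    (hs : WNorm1 φ κ hstar ≠ ⊤) (hh : WNorm1 φ κ h ≠ ⊤) :
    ∃ D : ℝ, HasSum (fun l => κ l * |⟪φ l, h⟫_ℝ| - κ l * |⟪φ l, hstar⟫_ℝ|
      - ⟪φ l, η⟫_ℝ * ⟪φ l, h - hstar⟫_ℝ) D ∧ Breg (WNorm1 φ κ) η hstar h = D := by
  have hsum_h := (summable_of_WNorm1_ne_top φ hκ hh).hasSum
  have hsum_s := (summable_of_WNorm1_ne_top φ hκ hs).hasSum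
  have hsum_η := φ.hasSum_inner_mul_inner η (h - hstar)
  simp only [fun l => real_inner_comm (φ l) η] at hsum_η
  refine ⟨_, (hsum_h.sub hsum_s).sub hsum_η, ?_⟩
  rw [Breg, coe_WNorm1_of_hasSum φ hκ hsum_h, coe_WNorm1_of_hasSum φ hκ hsum_s]
  rfl

theorem IsSubgrad.subgradient_abs_of_WNorm1 (hκ : ∀ l, 0 ≤ κ l) {hstar η : H}
    (hsub : IsSubgrad (WNorm1 φ κ) hstar η) (l : Λ) (s : ℝ) :
    κ l * |⟪φ l, hstar⟫_ℝ| + ⟪φ l, η⟫_ℝ * (s - ⟪φ l, hstar⟫_ℝ) ≤ κ l * |s| := by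
  classical
  have hsum := (summable_of_WNorm1_ne_top φ hκ hsub.WNorm1_ne_top).hasSum
  set x := hstar + (s - ⟪φ l, hstar⟫_ℝ) • φ l
  have hcoord : (fun m => κ m * |⟪φ m, x⟫_ℝ|) =
      Function.update (fun m => κ m * |⟪φ m, hstar⟫_ℝ|) l (κ l * |s|) := by
    funext m
    rcases eq_or_ne m l with rfl | hm
    · simp [x, inner_add_right, real_inner_smul_right, φ.orthonormal.1 m]
    · simp [x, hm, inner_add_right, real_inner_smul_right,
        orthonormal_iff_ite.mp φ.orthonormal m l]
  have hx := hcoord ▸ hsum.update l (κ l * |s|)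
  have hineq := hsub x
  rw [coe_WNorm1_of_hasSum φ hκ hsum, coe_WNorm1_of_hasSum φ hκ hx, ← EReal.coe_add,
    EReal.coe_le_coe_iff, add_sub_cancel_left, real_inner_smul_right,
    real_inner_comm (φ l) η] at hineq
  linarith

theorem IsSubgrad.exists_hasSum_indicator_le_Breg (hκ : ∀ l, 0 ≤ κ l) {hstar η : H}
    (hsub : IsSubgrad (WNorm1 φ κ) hstar η) {m : ℝ} (hm : 0 < m)
    (hm_le : ∀ l, |⟪φ l, η⟫_ℝ| ≠ κ l → m ≤ κ l - |⟪φ l, η⟫_ℝ|) {h : H}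
    (hh : WNorm1 φ κ h ≠ ⊤) :
    ∃ S D : ℝ, HasSum ({l | |⟪φ l, η⟫_ℝ| ≠ κ l}.indicator fun l => |⟪φ l, h - hstar⟫_ℝ|) S ∧
      m * S ≤ D ∧ Breg (WNorm1 φ κ) η hstar h = D := by
  obtain ⟨D, hD, hBreg⟩ := exists_hasSum_Breg_WNorm1 φ hκ hsub.WNorm1_ne_top hh
  set f := {l | |⟪φ l, η⟫_ℝ| ≠ κ l}.indicator fun l => |⟪φ l, h - hstar⟫_ℝ|
  have hterm : ∀ l, m * f l ≤ κ l * |⟪φ l, h⟫_ℝ| - κ l * |⟪φ l, hstar⟫_ℝ|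
      - ⟪φ l, η⟫_ℝ * ⟪φ l, h - hstar⟫_ℝ := by
    intro l
    have hcoord := hsub.subgradient_abs_of_WNorm1 φ hκ l
    by_cases hl : |⟪φ l, η⟫_ℝ| ≠ κ l
    · have hb := eq_zero_of_subgradient_abs (hκ l) hcoord hl
      simp only [f, Set.indicator_of_mem (show l ∈ {l | |⟪φ l, η⟫_ℝ| ≠ κ l} from hl),
        inner_sub_right, hb, sub_zero, abs_zero, mul_zero]
      nlinarith [hm_le l hl, le_abs_self (⟪φ l, η⟫_ℝ * ⟪φ l, h⟫_ℝ),
        abs_mul ⟪φ l, η⟫_ℝ ⟪φ l, h⟫_ℝ, abs_nonneg ⟪φ l, h⟫_ℝ]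
    · simp only [f, Set.indicator_of_notMem (show l ∉ {l | |⟪φ l, η⟫_ℝ| ≠ κ l} from hl),
        mul_zero, inner_sub_right]
      linarith [hcoord ⟪φ l, h⟫_ℝ]
  have hf : Summable f := (summable_mul_left_iff hm.ne').mp <|
    hD.summable.of_nonneg_of_le (fun l => mul_nonneg hm.le (Set.indicator_nonneg
      (fun _ _ => abs_nonneg _) l)) hterm
  refine ⟨_, D, hf.hasSum, ?_, hBreg⟩
  rw [← tsum_mul_left]
  exact hasSum_le hterm (hf.mul_left m).hasSum hD

end WNorm1

theorem normbound_bregman_general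
    {H Y : Type*} [NormedAddCommGroup H] [InnerProductSpace ℝ H]
    [NormedAddCommGroup Y] [InnerProductSpace ℝ Y]
    {Λ : Type*} (φ : HilbertBasis Λ ℝ H)
    (κ : Λ → ℝ) (a : ℝ) (ha : 0 < a) (hκ : ∀ l, a ≤ κ l)
    (A : H →L[ℝ] Y)
    (hstar : H)
    (η : H) (hsub : IsSubgrad (WNorm1 φ κ) hstar η)
    (K : ℝ) (hK0 : 0 ≤ K)
    (hKinv : ∀ g ∈
      (Submodule.span ℝ ((fun l => φ l) '' {l : Λ | |⟪φ l, η⟫_ℝ| = κ l}) : Set H),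
      ‖g‖ ≤ K * ‖A g‖)
    (h : H) :
    ((‖h - hstar‖ : ℝ) : EReal) ≤
      ((K * ‖A h - A hstar‖ : ℝ) : EReal) +
        (((1 + K * ‖A‖) /
            sInf ((fun l => κ l - |⟪φ l, η⟫_ℝ|) '' {l : Λ | |⟪φ l, η⟫_ℝ| ≠ κ l}) : ℝ) : EReal) *
          Breg (WNorm1 φ κ) η hstar h := by
  have hκ0 : ∀ l, 0 ≤ κ l := fun l => ha.le.trans (hκ l)
  have habs : ∀ l, |⟪φ l, η⟫_ℝ| ≤ κ l := fun l =>
    abs_le_of_subgradient_abs (hκ0 l) (hsub.subgradient_abs_of_WNorm1 φ hκ0 l)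
  have hbound := φ.norm_le_mul_norm_apply_of_inner_eq_zero A hKinv
  set m := sInf ((fun l => κ l - |⟪φ l, η⟫_ℝ|) '' {l : Λ | |⟪φ l, η⟫_ℝ| ≠ κ l})
  by_cases hΩ : ∀ l, |⟪φ l, η⟫_ℝ| = κ l
  · -- `sInf ∅ = 0` in `ℝ`, so the Bregman term vanishes and `h - h⋆` lies in `H_{Ω[η]}`.
    have hm : m = 0 := by simp [m, hΩ]
    rw [hm, div_zero, EReal.coe_zero, zero_mul, add_zero, EReal.coe_le_coe_iff, ← map_sub]
    exact hbound _ fun l hl => absurd (hΩ l) hl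
  have hm : 0 < m := sInf_image_sub_abs_pos ha hκ (φ.tendsto_inner_cofinite_zero η) habs
    (not_forall.mp hΩ)
  have hm_le : ∀ l, |⟪φ l, η⟫_ℝ| ≠ κ l → m ≤ κ l - |⟪φ l, η⟫_ℝ| := fun l hl =>
    csInf_le ⟨0, by rintro _ ⟨l, -, rfl⟩; exact sub_nonneg.mpr (habs l)⟩ ⟨l, hl, rfl⟩
  by_cases hh : WNorm1 φ κ h = ⊤
  · rw [Breg_eq_top hsub.WNorm1_ne_top hh,
      EReal.coe_mul_top_of_pos (by positivity), EReal.coe_add_top]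
    exact le_top
  obtain ⟨S, D, hS, hSD, hBreg⟩ := hsub.exists_hasSum_indicator_le_Breg φ hκ0 hm hm_le hh
  obtain ⟨v, hv, hvcoef⟩ := φ.exists_norm_le_of_hasSum_indicator (h - hstar) _ hS
  have hsplit := norm_add_le_of_norm_le_mul_norm_apply A hK0 (v := v) (hbound _ hvcoef)
  rw [sub_add_cancel, map_sub] at hsplit
  have hvD : ‖v‖ ≤ D / m := hv.trans ((le_div_iff₀ hm).mpr (by linarith))
  rw [hBreg, ← EReal.coe_mul, ← EReal.coe_add, EReal.coe_le_coe_iff]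
  calc ‖h - hstar‖ ≤ K * ‖A h - A hstar‖ + (1 + K * ‖A‖) * ‖v‖ := hsplit
    _ ≤ K * ‖A h - A hstar‖ + (1 + K * ‖A‖) * (D / m) := by gcongr
    _ = K * ‖A h - A hstar‖ + (1 + K * ‖A‖) / m * D := by ring

/-- **Norm bound via the ℓ¹ Bregman distance (Lemma `normbound2`).**
For sparse `hstar`, `η ∈ ∂‖hstar‖_{1,κ}` with `A` injective on
`H_{Ω[η]} = span {φ_λ : |⟪φ_λ, η⟫| = κ_λ}` and `K ≥ 0` a bound for the inverse
of the restriction `A_{Ω[η]}` (the operator norm `‖A_{Ω[η]}⁻¹‖` is the least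
such `K`), one has for all `h ∈ H`
`‖h - hstar‖ ≤ K ‖A h - A hstar‖ + ((1 + K‖A‖)/m[η]) D_η(h, hstar)`. -/
theorem normbound_bregman
    {H Y : Type*} [NormedAddCommGroup H] [InnerProductSpace ℝ H] [CompleteSpace H]
    [NormedAddCommGroup Y] [InnerProductSpace ℝ Y] [CompleteSpace Y]
    {Λ : Type*} [Countable Λ] (φ : HilbertBasis Λ ℝ H)
    (κ : Λ → ℝ) (a : ℝ) (ha : 0 < a) (hκ : ∀ l, a ≤ κ l)
    (A : H →L[ℝ] Y)
    (hstar : H) (hsparse : {l : Λ | ⟪φ l, hstar⟫_ℝ ≠ 0}.Finite)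
    (η : H) (hsub : IsSubgrad (WNorm1 φ κ) hstar η)
    (hinj : Set.InjOn A
      (Submodule.span ℝ ((fun l => φ l) '' {l : Λ | |⟪φ l, η⟫_ℝ| = κ l}) : Set H))
    (K : ℝ) (hK0 : 0 ≤ K)
    (hKinv : ∀ g ∈
      (Submodule.span ℝ ((fun l => φ l) '' {l : Λ | |⟪φ l, η⟫_ℝ| = κ l}) : Set H),
      ‖g‖ ≤ K * ‖A g‖)
    (h : H) :
    ((‖h - hstar‖ : ℝ) : EReal) ≤
      ((K * ‖A h - A hstar‖ : ℝ) : EReal) +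
        (((1 + K * ‖A‖) /
            sInf ((fun l => κ l - |⟪φ l, η⟫_ℝ|) '' {l : Λ | |⟪φ l, η⟫_ℝ| ≠ κ l}) : ℝ) : EReal) *
          Breg (WNorm1 φ κ) η hstar h :=
  normbound_bregman_general φ κ a ha hκ A hstar η hsub K hK0 hKinv h
end
end

section
/- Let X, H, Y be separable real Hilbert spaces, W : X → H and A : H → Y bounded linear, R : X → [0,∞] proper, convex and weakly lower semicontinuous, (φ_λ)_{λ∈Λ} an orthonormal basis of H with countable Λ, and weights κ_λ ≥ a > 0. Suppose (x⋆, y⋆) satisfies A W x⋆ = y⋆, there exists ν ∈ Y with W*A*ν ∈ ∂(R + ‖W·‖_{1,κ})(x⋆), and there exist ξ ∈ ∂R(x⋆) and η ∈ ∂‖W x⋆‖_{1,κ} with W*A*ν = ξ + W*η, and the restriction of A to H_{Ω[η]} := span{φ_λ : λ ∈ Ω[η]} is injective, where Ω[η] := {λ : |⟨φ_λ, η⟩| = κ_λ}. Let C > 0 and take α = Cδ. Then for every δ > 0, every yδ with ‖yδ − y⋆‖ ≤ δ, and every minimizer xαδ of 𝒜_{α,yδ}(x) := ½‖A W x − yδ‖²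 + α(R(x) + ‖W x‖_{1,κ}), the Bregman distance satisfies D_ξ^{R}(xαδ, x⋆) ≤ c δ with c := (1 + C‖ν‖)²/(2C). -/
open scoped ENNReal InnerProductSpace
open Filter

noncomputable section

/-!
Comparing the Tikhonov functional at the minimizer `x` with its value at `xs` and writing the
source element as `F* ν` turns `α D(x, xs)` into residual terms; Cauchy–Schwarz and completing the
square in `‖F x - y‖` bound it by `(δ + α‖ν‖)²/2`. Here `D` is the Bregman distance of the full
penalty `R + ‖W·‖_{1,κ}`; by the splitting `F* ν = ξ + W* η` it exceeds that of `R` by the Bregman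
distance of `‖·‖_{1,κ}` at `W xs` with respect to `η`, which is nonnegative.
-/

namespace IsSubgrad

variable {X : Type*} [NormedAddCommGroup X] [InnerProductSpace ℝ X]

theorem ne_top_of_ne_top {Q : X → ℝ≥0∞} {xs ξ x : X} (h : IsSubgrad Q xs ξ) (hx : Q x ≠ ⊤) :
    Q xs ≠ ⊤ := by
  intro hxs
  have := h x
  rw [hxs, EReal.coe_ennreal_top, EReal.top_add_coe, top_le_iff,
    EReal.coe_ennreal_eq_top_iff] at this
  exact hx this

theorem toReal_le {Q : X → ℝ≥0∞} {xs ξ x : X} (h : IsSubgrad Q xs ξ) (hxs : Q xs ≠ ⊤)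
    (hx : Q x ≠ ⊤) : (Q xs).toReal + ⟪ξ, x - xs⟫_ℝ ≤ (Q x).toReal := by
  have := h x
  rwa [← EReal.coe_ennreal_toReal hxs, ← EReal.coe_ennreal_toReal hx, ← EReal.coe_add,
    EReal.coe_le_coe_iff] at this

theorem comp_continuousLinearMap {H : Type*} [NormedAddCommGroup H] [InnerProductSpace ℝ H]
    [CompleteSpace X] [CompleteSpace H] {P : H → ℝ≥0∞} {W : X →L[ℝ] H} {xs : X} {η : H}
    (h : IsSubgrad P (W xs) η) :
    IsSubgrad (fun x => P (W x)) xs (ContinuousLinearMap.adjoint W η) := fun x => by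
  simpa only [ContinuousLinearMap.adjoint_inner_left, map_sub] using h (W x)

end IsSubgrad

section Bregman

variable {X : Type*} [NormedAddCommGroup X] [InnerProductSpace ℝ X]

theorem breg_eq_coe {Q : X → ℝ≥0∞} {ξ xs x : X} (hxs : Q xs ≠ ⊤) (hx : Q x ≠ ⊤) :
    Breg Q ξ xs x = (((Q x).toReal - (Q xs).toReal - ⟪ξ, x - xs⟫_ℝ : ℝ) : EReal) := by
  rw [Breg, ← EReal.coe_ennreal_toReal hxs, ← EReal.coe_ennreal_toReal hx, ← EReal.coe_sub,
    ← EReal.coe_sub]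

theorem IsSubgrad.breg_le_add {R P : X → ℝ≥0∞} {ξ η xs x : X} (hη : IsSubgrad P xs η)
    (hxs : R xs + P xs ≠ ⊤) (hx : R x + P x ≠ ⊤) :
    Breg R ξ xs x ≤ Breg (fun x => R x + P x) (ξ + η) xs x := by
  obtain ⟨hRxs, hPxs⟩ := ENNReal.add_ne_top.1 hxs
  obtain ⟨hRx, hPx⟩ := ENNReal.add_ne_top.1 hx
  rw [breg_eq_coe hRxs hRx, breg_eq_coe (Q := fun x => R x + P x) hxs hx, EReal.coe_le_coe_iff,
    ENNReal.toReal_add hRxs hPxs, ENNReal.toReal_add hRx hPx, inner_add_left]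
  linarith [hη.toReal_le hPxs hPx]

end Bregman

section Tikhonov

variable {X Y : Type*}

def IsTikhonovMinimizer [NormedAddCommGroup Y] (F : X → Y) (Q : X → ℝ≥0∞) (α : ℝ) (y : Y)
    (x : X) : Prop :=
  ∀ x', ENNReal.ofReal (‖F x - y‖ ^ 2 / 2) + ENNReal.ofReal α * Q x ≤
    ENNReal.ofReal (‖F x' - y‖ ^ 2 / 2) + ENNReal.ofReal α * Q x'

namespace IsTikhonovMinimizer

variable [NormedAddCommGroup Y] {F : X → Y} {Q : X → ℝ≥0∞} {α : ℝ} {y : Y} {x x' : X}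

theorem penalty_ne_top (h : IsTikhonovMinimizer F Q α y x) (hα : 0 < α) (hx' : Q x' ≠ ⊤) :
    Q x ≠ ⊤ := by
  intro hx
  have := h x'
  rw [hx, ENNReal.mul_top (ENNReal.ofReal_pos.2 hα).ne', add_top, top_le_iff] at this
  exact ENNReal.add_ne_top.2 ⟨ENNReal.ofReal_ne_top,
    ENNReal.mul_ne_top ENNReal.ofReal_ne_top hx'⟩ this

theorem toReal_le (h : IsTikhonovMinimizer F Q α y x) (hα : 0 ≤ α) (hx : Q x ≠ ⊤)
    (hx' : Q x' ≠ ⊤) :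
    ‖F x - y‖ ^ 2 / 2 + α * (Q x).toReal ≤ ‖F x' - y‖ ^ 2 / 2 + α * (Q x').toReal := by
  have hfin : ∀ z, Q z ≠ ⊤ →
      ENNReal.ofReal (‖F z - y‖ ^ 2 / 2) + ENNReal.ofReal α * Q z ≠ ⊤ := fun z hz =>
    ENNReal.add_ne_top.2 ⟨ENNReal.ofReal_ne_top, ENNReal.mul_ne_top ENNReal.ofReal_ne_top hz⟩
  have := (ENNReal.toReal_le_toReal (hfin x hx) (hfin x' hx')).2 (h x')
  rwa [ENNReal.toReal_add ENNReal.ofReal_ne_top (ENNReal.mul_ne_top ENNReal.ofReal_ne_top hx),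
    ENNReal.toReal_add ENNReal.ofReal_ne_top (ENNReal.mul_ne_top ENNReal.ofReal_ne_top hx'),
    ENNReal.toReal_mul, ENNReal.toReal_mul, ENNReal.toReal_ofReal hα,
    ENNReal.toReal_ofReal (by positivity), ENNReal.toReal_ofReal (by positivity)] at this

theorem breg_le [NormedAddCommGroup X] [InnerProductSpace ℝ X] [CompleteSpace X]
    [InnerProductSpace ℝ Y] [CompleteSpace Y] {F : X →L[ℝ] Y} {δ : ℝ} {xs : X}
    (h : IsTikhonovMinimizer F Q α y x) (hα : 0 < α) (hxs : Q xs ≠ ⊤) (hdata : ‖F xs - y‖ ≤ δ)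
    (ν : Y) :
    Breg Q (ContinuousLinearMap.adjoint F ν) xs x ≤
      (((δ + α * ‖ν‖) ^ 2 / (2 * α) : ℝ) : EReal) := by
  have hx := h.penalty_ne_top hα hxs
  have hmin := h.toReal_le hα.le hx hxs
  have hsource : ⟪ContinuousLinearMap.adjoint F ν, x - xs⟫_ℝ =
      ⟪ν, F x - y⟫_ℝ - ⟪ν, F xs - y⟫_ℝ := by
    rw [ContinuousLinearMap.adjoint_inner_left, ← inner_sub_right, map_sub,
      sub_sub_sub_cancel_right]
  have hres : -(‖ν‖ * ‖F x - y‖) ≤ ⟪ν, F x - y⟫_ℝ := neg_le_of_abs_le (abs_real_inner_le_norm _ _)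
  have hdata' : ⟪ν, F xs - y⟫_ℝ ≤ ‖ν‖ * δ :=
    (real_inner_le_norm _ _).trans (mul_le_mul_of_nonneg_left hdata (norm_nonneg ν))
  rw [breg_eq_coe hxs hx, EReal.coe_le_coe_iff, le_div_iff₀ (by positivity), hsource]
  -- completing the square: `‖F x - y‖² / 2 - α‖ν‖‖F x - y‖ ≥ -α²‖ν‖² / 2`
  nlinarith [mul_le_mul_of_nonneg_left hres hα.le, mul_le_mul_of_nonneg_left hdata' hα.le,
    sq_nonneg (‖F x - y‖ - α * ‖ν‖), pow_le_pow_left₀ (norm_nonneg _) hdata 2]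

end IsTikhonovMinimizer

end Tikhonov

theorem strict_bregman_rate_general
    {X H Y : Type*} [NormedAddCommGroup X] [InnerProductSpace ℝ X] [CompleteSpace X]
    [NormedAddCommGroup H] [InnerProductSpace ℝ H] [CompleteSpace H]
    [NormedAddCommGroup Y] [InnerProductSpace ℝ Y] [CompleteSpace Y]
    {Λ : Type*} (φ : HilbertBasis Λ ℝ H)
    (κ : Λ → ℝ)
    (W : X →L[ℝ] H) (A : H →L[ℝ] Y)
    (R : X → ℝ≥0∞)
    (hjoint : ∃ x, R x + WNorm1 φ κ (W x) ≠ ∞)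
    (xstar : X) (ystar : Y) (hsol : A (W xstar) = ystar)
    (ν : Y) (hν : IsSubgrad (fun x => R x + WNorm1 φ κ (W x)) xstar
      (ContinuousLinearMap.adjoint W (ContinuousLinearMap.adjoint A ν)))
    (ξ : X)
    (η : H) (hη : IsSubgrad (WNorm1 φ κ) (W xstar) η)
    (hsplit : ContinuousLinearMap.adjoint W (ContinuousLinearMap.adjoint A ν) =
      ξ + ContinuousLinearMap.adjoint W η)
    (C δ : ℝ) (hC : 0 < C) (hδ : 0 < δ)
    (yδ : Y) (hdata : ‖yδ - ystar‖ ≤ δ)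
    (xad : X)
    (hmin : ∀ x : X,
      ENNReal.ofReal (‖A (W xad) - yδ‖ ^ 2 / 2) +
          ENNReal.ofReal (C * δ) * (R xad + WNorm1 φ κ (W xad)) ≤
        ENNReal.ofReal (‖A (W x) - yδ‖ ^ 2 / 2) +
          ENNReal.ofReal (C * δ) * (R x + WNorm1 φ κ (W x))) :
    Breg R ξ xstar xad ≤ (((1 + C * ‖ν‖) ^ 2 / (2 * C) * δ : ℝ) : EReal) := by
  obtain ⟨x₀, hx₀⟩ := hjoint
  have hα : 0 < C * δ := mul_pos hC hδ
  have hmin' : IsTikhonovMinimizer (A ∘L W) (fun x => R x + WNorm1 φ κ (W x)) (C * δ) yδ xad :=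
    hmin
  have hxstar := hν.ne_top_of_ne_top hx₀
  have hdata' : ‖(A ∘L W) xstar - yδ‖ ≤ δ := by
    rwa [ContinuousLinearMap.comp_apply, hsol, norm_sub_rev]
  calc Breg R ξ xstar xad
      ≤ Breg (fun x => R x + WNorm1 φ κ (W x)) (ξ + ContinuousLinearMap.adjoint W η) xstar xad :=
        hη.comp_continuousLinearMap.breg_le_add hxstar (hmin'.penalty_ne_top hα hxstar)
    _ = Breg (fun x => R x + WNorm1 φ κ (W x)) (ContinuousLinearMap.adjoint (A ∘L W) ν)
          xstar xad := by
        rw [ContinuousLinearMap.adjoint_comp, ContinuousLinearMap.comp_apply, hsplit]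
    _ ≤ (((δ + C * δ * ‖ν‖) ^ 2 / (2 * (C * δ)) : ℝ) : EReal) := hmin'.breg_le hα hxstar hdata' ν
    _ = (((1 + C * ‖ν‖) ^ 2 / (2 * C) * δ : ℝ) : EReal) := by
        congr 1
        field_simp

/-- **Strict ℓ¹ co-regularization: Bregman distance rate.**
Under the source condition `W*A*ν ∈ ∂(R + ‖W·‖_{1,κ})(xstar)`, the splitting
`W*A*ν = ξ + W*η` with `ξ ∈ ∂R(xstar)`, `η ∈ ∂‖W xstar‖_{1,κ}`, and restricted
injectivity of `A` on `H_{Ω[η]}`, every minimizer `xad` of `𝒜_{α,yδ}` with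
`α = Cδ` satisfies `D_ξ^R(xad, xstar) ≤ (1 + C‖ν‖)²/(2C) · δ`. -/
theorem strict_bregman_rate
    {X H Y : Type*} [NormedAddCommGroup X] [InnerProductSpace ℝ X] [CompleteSpace X]
    [TopologicalSpace.SeparableSpace X]
    [NormedAddCommGroup H] [InnerProductSpace ℝ H] [CompleteSpace H]
    [NormedAddCommGroup Y] [InnerProductSpace ℝ Y] [CompleteSpace Y]
    [TopologicalSpace.SeparableSpace Y]
    {Λ : Type*} [Countable Λ] (φ : HilbertBasis Λ ℝ H)
    (κ : Λ → ℝ) (a : ℝ) (ha : 0 < a) (hκ : ∀ l, a ≤ κ l)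
    (W : X →L[ℝ] H) (A : H →L[ℝ] Y)
    (R : X → ℝ≥0∞) (hRproper : ∃ x, R x ≠ ∞) (hRconv : ConvexE R) (hRwlsc : WeakLSC R)
    (hjoint : ∃ x, R x + WNorm1 φ κ (W x) ≠ ∞)
    (xstar : X) (ystar : Y) (hsol : A (W xstar) = ystar)
    (ν : Y) (hν : IsSubgrad (fun x => R x + WNorm1 φ κ (W x)) xstar
      (ContinuousLinearMap.adjoint W (ContinuousLinearMap.adjoint A ν)))
    (ξ : X) (hξ : IsSubgrad R xstar ξ)
    (η : H) (hη : IsSubgrad (WNorm1 φ κ) (W xstar) η)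
    (hsplit : ContinuousLinearMap.adjoint W (ContinuousLinearMap.adjoint A ν) =
      ξ + ContinuousLinearMap.adjoint W η)
    (hinj : Set.InjOn A (Submodule.span ℝ ((fun l => φ l) ''
      {l : Λ | |⟪φ l, η⟫_ℝ| = κ l}) : Set H))
    (C δ : ℝ) (hC : 0 < C) (hδ : 0 < δ)
    (yδ : Y) (hdata : ‖yδ - ystar‖ ≤ δ)
    (xad : X)
    (hmin : ∀ x : X,
      ENNReal.ofReal (‖A (W xad) - yδ‖ ^ 2 / 2) +
          ENNReal.ofReal (C * δ) * (R xad + WNorm1 φ κ (W xad)) ≤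
        ENNReal.ofReal (‖A (W x) - yδ‖ ^ 2 / 2) +
          ENNReal.ofReal (C * δ) * (R x + WNorm1 φ κ (W x))) :
    Breg R ξ xstar xad ≤ (((1 + C * ‖ν‖) ^ 2 / (2 * C) * δ : ℝ) : EReal) :=
  strict_bregman_rate_general φ κ W A R hjoint xstar ystar hsol ν hν ξ η hη hsplit C δ hC hδ yδ
    hdata xad hmin
end
end

section
/- Let X, H, Y be separable real Hilbert spaces, W : X → H and A : H → Y bounded linear, R : X → [0,∞] proper, convex and weakly lower semicontinuous, (φ_λ)_{λ∈Λ} an orthonormal basis of H with countable Λ, and weights κ_λ ≥ a > 0. Suppose (x⋆, y⋆) satisfies A W x⋆ = y⋆, there exists ν ∈ Y with W*A*ν ∈ ∂(R + ‖W·‖_{1,κ})(x⋆), and there exist ξ ∈ ∂R(x⋆) and η ∈ ∂‖W x⋆‖_{1,κ} with W*A*ν = ξ + W*η, and the restriction A_{Ω[η]} of A to H_{Ω[η]} := span{φ_λ : λ ∈ Ω[η]} is injective, where Ω[η] := {λ : |⟨φ_λ, η⟩| = κ_λ}. Let C > 0 and take α = Cδ. Then for every δ > 0, every yδ with ‖yδ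 − y⋆‖ ≤ δ, and every minimizer xαδ of 𝒜_{α,yδ}(x) := ½‖A W x − yδ‖² + α(R(x) + ‖W x‖_{1,κ}), one has ‖W xαδ − W x⋆‖ ≤ d δ with d := 2‖A_{Ω[η]}⁻¹‖(1 + C‖ν‖) + ((1 + ‖A_{Ω[η]}⁻¹‖‖A‖)/m[η]) · (1 + C‖ν‖)²/(2C), where m[η] := inf{κ_λ − |⟨φ_λ, η⟩| : λ ∉ Ω[η]}. -/
open scoped ENNReal InnerProductSpace
open Filter

noncomputable section

/-!
Testing the minimality of `xad` against `xstar` and using the source condition gives the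
classical Tikhonov estimates: the residual `‖A (W xad) - A (W xstar)‖` and the Bregman distance of
`R + ‖W ·‖_{1,κ}` are `O(δ)`. Through the splitting `W*A*ν = ξ + W*η` the Bregman distance of the
ℓ¹ term alone is `O(δ)`; it equals `∑ (κ_λ |h_λ| - η_λ h_λ)` and therefore bounds `m[η]` times the
ℓ¹ mass of `W xad` outside `Ω[η]`. Since `W xstar` is supported in the finite set `Ω[η]`, the rest
of `W xad - W xstar` lies in `H_{Ω[η]}`, where `A` is boundedly invertible.
-/

open ContinuousLinearMap

section Subgradient

variable {X : Type*} [NormedAddCommGroup X] [InnerProductSpace ℝ X] {Q : X → ℝ≥0∞} {xs ζ x : X}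

theorem IsSubgrad.ne_top_s12 (h : IsSubgrad Q xs ζ) (hx : Q x ≠ ∞) : Q xs ≠ ∞ := by
  intro htop
  have := h x
  rw [htop, EReal.coe_ennreal_top, EReal.top_add_coe, top_le_iff,
    EReal.coe_ennreal_eq_top_iff] at this
  exact hx this

theorem IsSubgrad.toReal_add_inner_le_s12 (h : IsSubgrad Q xs ζ) (hx : Q x ≠ ∞) :
    (Q xs).toReal + ⟪ζ, x - xs⟫_ℝ ≤ (Q x).toReal := by
  have := h x
  rw [← EReal.coe_ennreal_toReal hx, ← EReal.coe_ennreal_toReal (h.ne_top_s12 hx),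
    ← EReal.coe_add] at this
  exact_mod_cast this

theorem IsSubgrad.toReal_bregman_comp_le {H : Type*} [NormedAddCommGroup H]
    [InnerProductSpace ℝ H] [CompleteSpace X] [CompleteSpace H] (W : X →L[ℝ] H)
    {N : H → ℝ≥0∞} (hζ : IsSubgrad Q xs ζ) (η : H)
    (hx : Q x + N (W x) ≠ ∞) (hxs : Q xs + N (W xs) ≠ ∞) :
    (N (W x)).toReal - (N (W xs)).toReal - ⟪η, W x - W xs⟫_ℝ ≤
      (Q x + N (W x)).toReal - (Q xs + N (W xs)).toReal - ⟪ζ + adjoint W η, x - xs⟫_ℝ := by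
  obtain ⟨hQx, hNx⟩ := ENNReal.add_ne_top.1 hx
  obtain ⟨hQxs, hNxs⟩ := ENNReal.add_ne_top.1 hxs
  have := hζ.toReal_add_inner_le_s12 hQx
  rw [ENNReal.toReal_add hQx hNx, ENNReal.toReal_add hQxs hNxs, inner_add_left,
    adjoint_inner_left, map_sub]
  linarith

end Subgradient

section Tikhonov

variable {X Y : Type*} [NormedAddCommGroup X] [InnerProductSpace ℝ X]
  [NormedAddCommGroup Y] [InnerProductSpace ℝ Y]

/-- `𝒜_{α,y}` -/
def tikhonov (T : X →L[ℝ] Y) (Q : X → ℝ≥0∞) (α : ℝ) (y : Y) (x : X) : ℝ≥0∞ :=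
  ENNReal.ofReal (‖T x - y‖ ^ 2 / 2) + ENNReal.ofReal α * Q x

variable {T : X →L[ℝ] Y} {Q : X → ℝ≥0∞} {α : ℝ} {y : Y} {x : X}

theorem tikhonov_ne_top_iff (hα : 0 < α) : tikhonov T Q α y x ≠ ∞ ↔ Q x ≠ ∞ := by
  simp [tikhonov, ENNReal.mul_eq_top, hα]

theorem toReal_tikhonov (hα : 0 ≤ α) (hx : Q x ≠ ∞) :
    (tikhonov T Q α y x).toReal = ‖T x - y‖ ^ 2 / 2 + α * (Q x).toReal := by
  rw [tikhonov, ENNReal.toReal_add ENNReal.ofReal_ne_top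
      (ENNReal.mul_ne_top ENNReal.ofReal_ne_top hx), ENNReal.toReal_mul,
    ENNReal.toReal_ofReal (by positivity), ENNReal.toReal_ofReal hα]

theorem ne_top_of_tikhonov_le (hα : 0 < α) {xa : X}
    (hle : tikhonov T Q α y xa ≤ tikhonov T Q α y x) (hx : Q x ≠ ∞) : Q xa ≠ ∞ :=
  (tikhonov_ne_top_iff hα).1 (ne_top_of_le_ne_top ((tikhonov_ne_top_iff hα).2 hx) hle)

theorem rate_of_variational_ineq {r δ C n D : ℝ} (hC : 0 < C) (hδ : 0 < δ) (hn : 0 ≤ n)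
    (hD : 0 ≤ D) (h : r ^ 2 / 2 + C * δ * D ≤ δ ^ 2 / 2 + C * δ * n * (r + δ)) :
    r ≤ δ + 2 * C * δ * n ∧ D ≤ δ * (1 + C * n) ^ 2 / (2 * C) := by
  have hα : 0 < C * δ := mul_pos hC hδ
  constructor
  · nlinarith [mul_nonneg hα.le hn, mul_nonneg hα.le hD]
  · rw [le_div_iff₀ (by positivity)]
    refine le_of_mul_le_mul_left ?_ hδ
    nlinarith [sq_nonneg (r - C * δ * n)]

theorem tikhonov_rate [CompleteSpace X] [CompleteSpace Y] (hQ : ∃ x, Q x ≠ ∞) {xs : X} {ν : Y}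
    (hν : IsSubgrad Q xs (adjoint T ν)) {C δ : ℝ} (hC : 0 < C) (hδ : 0 < δ) {yδ : Y}
    (hdata : ‖yδ - T xs‖ ≤ δ) {xa : X}
    (hmin : ∀ x, tikhonov T Q (C * δ) yδ xa ≤ tikhonov T Q (C * δ) yδ x) :
    ‖T xa - T xs‖ ≤ 2 * δ * (1 + C * ‖ν‖) ∧
      (Q xa).toReal - (Q xs).toReal - ⟪adjoint T ν, xa - xs⟫_ℝ ≤
        δ * (1 + C * ‖ν‖) ^ 2 / (2 * C) := by
  obtain ⟨x₀, hx₀⟩ := hQ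
  have hα : 0 < C * δ := mul_pos hC hδ
  have hQs : Q xs ≠ ∞ := hν.ne_top_s12 hx₀
  have hQa : Q xa ≠ ∞ := ne_top_of_tikhonov_le hα (hmin xs) hQs
  have hminR := (ENNReal.toReal_le_toReal ((tikhonov_ne_top_iff hα).2 hQa)
    ((tikhonov_ne_top_iff hα).2 hQs)).2 (hmin xs)
  rw [toReal_tikhonov hα.le hQa, toReal_tikhonov hα.le hQs] at hminR
  have hfit : ‖T xs - yδ‖ ^ 2 ≤ δ ^ 2 := by rw [norm_sub_rev]; gcongr
  have hsrc := hν.toReal_add_inner_le_s12 hQa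
  rw [adjoint_inner_left, map_sub] at hsrc ⊢
  have hcs : -⟪ν, T xa - T xs⟫_ℝ ≤ ‖ν‖ * (‖T xa - yδ‖ + δ) :=
    calc -⟪ν, T xa - T xs⟫_ℝ = ⟪ν, yδ - T xa⟫_ℝ + ⟪ν, T xs - yδ⟫_ℝ := by
          rw [← inner_neg_right, ← inner_add_right]; congr 1; abel
    _ ≤ ‖ν‖ * ‖yδ - T xa‖ + ‖ν‖ * ‖T xs - yδ‖ :=
          add_le_add (real_inner_le_norm _ _) (real_inner_le_norm _ _)
    _ ≤ ‖ν‖ * (‖T xa - yδ‖ + δ) := by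
          rw [norm_sub_rev yδ, norm_sub_rev (T xs), ← mul_add]; gcongr
  obtain ⟨hres, hbreg⟩ := rate_of_variational_ineq (r := ‖T xa - yδ‖)
    (D := (Q xa).toReal - (Q xs).toReal - ⟪ν, T xa - T xs⟫_ℝ) hC hδ (norm_nonneg ν)
    (by linarith) (by linarith [mul_le_mul_of_nonneg_left hcs hα.le])
  refine ⟨?_, hbreg⟩
  calc ‖T xa - T xs‖ ≤ ‖T xa - yδ‖ + ‖yδ - T xs‖ := norm_sub_le_norm_sub_add_norm_sub _ _ _
  _ ≤ δ + 2 * C * δ * ‖ν‖ + δ := add_le_add hres hdata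
  _ = 2 * δ * (1 + C * ‖ν‖) := by ring

end Tikhonov

theorem abs_le_and_mul_eq_of_forall_le_mul_abs_add {k c e : ℝ} (hk : 0 ≤ k)
    (h : ∀ s, k * |c| + e * s ≤ k * |c + s|) : |e| ≤ k ∧ e * c = k * |c| := by
  have h₁ := h 1
  have h₂ := h (-1)
  have h₃ := h (-c)
  rw [add_neg_cancel, abs_zero, mul_zero] at h₃
  have hup : |c + 1| ≤ |c| + 1 := (abs_add_le c 1).trans_eq (by rw [abs_one])
  have hdown : |c + -1| ≤ |c| + 1 := (abs_add_le c (-1)).trans_eq (by rw [abs_neg, abs_one])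
  have he : |e| ≤ k := abs_le.2 ⟨by nlinarith, by nlinarith⟩
  have hec : e * c ≤ k * |c| := (le_abs_self _).trans <| by
    rw [abs_mul]; exact mul_le_mul_of_nonneg_right he (abs_nonneg c)
  exact ⟨he, by linarith⟩

theorem sInf_image_pos_of_finite {ι : Type*} {u : ι → ℝ} {s : Set ι} {ε : ℝ} (hε : 0 < ε)
    (hpos : ∀ l ∈ s, 0 < u l) (hfin : {l ∈ s | u l < ε}.Finite) (hne : s.Nonempty) :
    0 < sInf (u '' s) := by
  obtain ⟨b, hb, hbu⟩ : ∃ b, 0 < b ∧ ∀ l ∈ s, b ≤ u l := by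
    rcases Set.eq_empty_or_nonempty {l ∈ s | u l < ε} with hF | hF
    · exact ⟨ε, hε, fun l hl => not_lt.1 fun hlt => hF.subset ⟨hl, hlt⟩⟩
    · obtain ⟨l₀, ⟨hl₀, hl₀ε⟩, hmin⟩ := Set.exists_min_image _ u hfin hF
      refine ⟨u l₀, hpos l₀ hl₀, fun l hl => ?_⟩
      by_cases hlt : u l < ε
      · exact hmin l ⟨hl, hlt⟩
      · linarith
  exact hb.trans_le (le_csInf (hne.image u) (Set.forall_mem_image.2 hbu))

section WeightedL1

variable {H : Type*} [NormedAddCommGroup H] [InnerProductSpace ℝ H] {Λ : Type*}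
  (φ : HilbertBasis Λ ℝ H) {κ : Λ → ℝ} {h hs η : H}

theorem wnorm1_zero : WNorm1 φ κ 0 = 0 := by
  simp [WNorm1]

theorem IsSubgrad.wnorm1_ne_top (hη : IsSubgrad (WNorm1 φ κ) h η) : WNorm1 φ κ h ≠ ∞ :=
  hη.ne_top_s12 (x := 0) (by simp [wnorm1_zero])

theorem hasSum_wnorm1_toReal (hκ : ∀ l, 0 ≤ κ l) (hh : WNorm1 φ κ h ≠ ∞) :
    HasSum (fun l => κ l * |⟪φ l, h⟫_ℝ|) (WNorm1 φ κ h).toReal := by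
  have := ENNReal.hasSum_toReal hh
  simp only [ENNReal.toReal_ofReal (mul_nonneg (hκ _) (abs_nonneg _))] at this
  rwa [WNorm1, ENNReal.tsum_toReal_eq fun _ => ENNReal.ofReal_ne_top,
    tsum_congr fun l => ENNReal.toReal_ofReal (mul_nonneg (hκ l) (abs_nonneg _))]

theorem summable_abs_inner_of_wnorm1_ne_top {a : ℝ} (ha : 0 < a) (hκ : ∀ l, a ≤ κ l)
    (hh : WNorm1 φ κ h ≠ ∞) : Summable fun l => |⟪φ l, h⟫_ℝ| := by
  refine .of_nonneg_of_le (fun _ => abs_nonneg _) (fun l => ?_)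
    ((hasSum_wnorm1_toReal φ (fun l => ha.le.trans (hκ l)) hh).summable.mul_left a⁻¹)
  rw [le_inv_mul_iff₀ ha]
  exact mul_le_mul_of_nonneg_right (hκ l) (abs_nonneg _)

theorem summable_abs_inner_sub_of_wnorm1_ne_top {a : ℝ} (ha : 0 < a) (hκ : ∀ l, a ≤ κ l)
    (hh : WNorm1 φ κ h ≠ ∞) (hhs : WNorm1 φ κ hs ≠ ∞) :
    Summable fun l => |⟪φ l, h - hs⟫_ℝ| :=
  .of_nonneg_of_le (fun _ => abs_nonneg _) (fun l => by rw [inner_sub_right]; exact abs_sub _ _)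
    ((summable_abs_inner_of_wnorm1_ne_top φ ha hκ hh).add
      (summable_abs_inner_of_wnorm1_ne_top φ ha hκ hhs))

theorem wnorm1_add_smul_add (h : H) (l : Λ) (s : ℝ) :
    WNorm1 φ κ (h + s • φ l) + ENNReal.ofReal (κ l * |⟪φ l, h⟫_ℝ|) =
      WNorm1 φ κ h + ENNReal.ofReal (κ l * |⟪φ l, h⟫_ℝ + s|) := by
  classical
  have hcoef : ∀ j, ⟪φ j, h + s • φ l⟫_ℝ = ⟪φ j, h⟫_ℝ + if j = l then s else 0 := by
    intro j
    rw [inner_add_right, real_inner_smul_right, orthonormal_iff_ite.1 φ.orthonormal]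
    split_ifs <;> ring
  have hrest : (∑' j, if j = l then 0 else ENNReal.ofReal (κ j * |⟪φ j, h + s • φ l⟫_ℝ|)) =
      ∑' j, if j = l then 0 else ENNReal.ofReal (κ j * |⟪φ j, h⟫_ℝ|) :=
    tsum_congr fun j => by
      split_ifs with hj
      · rfl
      · rw [hcoef, if_neg hj, add_zero]
  rw [WNorm1, WNorm1, ENNReal.tsum_eq_add_tsum_ite l,
    ENNReal.tsum_eq_add_tsum_ite (f := fun j => ENNReal.ofReal (κ j * |⟪φ j, h⟫_ℝ|)) l, hrest,
    hcoef, if_pos rfl]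
  ring

theorem IsSubgrad.wnorm1_coord (hκ : ∀ l, 0 ≤ κ l) (hη : IsSubgrad (WNorm1 φ κ) h η) (l : Λ) :
    |⟪φ l, η⟫_ℝ| ≤ κ l ∧ ⟪φ l, η⟫_ℝ * ⟪φ l, h⟫_ℝ = κ l * |⟪φ l, h⟫_ℝ| := by
  refine abs_le_and_mul_eq_of_forall_le_mul_abs_add (hκ l) fun s => ?_
  have hfin := hη.wnorm1_ne_top φ
  have hupd := wnorm1_add_smul_add φ (κ := κ) h l s
  have hfin' : WNorm1 φ κ (h + s • φ l) ≠ ∞ := by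
    intro htop
    rw [htop, top_add] at hupd
    exact ENNReal.add_ne_top.2 ⟨hfin, ENNReal.ofReal_ne_top⟩ hupd.symm
  have hsub := hη.toReal_add_inner_le_s12 hfin'
  rw [add_sub_cancel_left, real_inner_smul_right, real_inner_comm (φ l) η] at hsub
  have hupd' := congrArg ENNReal.toReal hupd
  rw [ENNReal.toReal_add hfin' ENNReal.ofReal_ne_top, ENNReal.toReal_add hfin ENNReal.ofReal_ne_top,
    ENNReal.toReal_ofReal (mul_nonneg (hκ l) (abs_nonneg _)),
    ENNReal.toReal_ofReal (mul_nonneg (hκ l) (abs_nonneg _))] at hupd'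
  linarith

theorem HilbertBasis.hasSum_inner_sq (g : H) : HasSum (fun l => ⟪φ l, g⟫_ℝ ^ 2) (‖g‖ ^ 2) := by
  have hsq : (fun l => ⟪φ l, g⟫_ℝ ^ 2) = fun l => ⟪g, φ l⟫_ℝ * ⟪φ l, g⟫_ℝ :=
    funext fun l => by rw [sq, real_inner_comm]
  rw [hsq, ← real_inner_self_eq_norm_sq]
  exact φ.hasSum_inner_mul_inner g g

theorem IsSubgrad.hasSum_wnorm1_bregman (hκ : ∀ l, 0 ≤ κ l) (hη : IsSubgrad (WNorm1 φ κ) hs η)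
    (hh : WNorm1 φ κ h ≠ ∞) :
    HasSum (fun l => κ l * |⟪φ l, h⟫_ℝ| - ⟪φ l, η⟫_ℝ * ⟪φ l, h⟫_ℝ)
      ((WNorm1 φ κ h).toReal - (WNorm1 φ κ hs).toReal - ⟪η, h - hs⟫_ℝ) := by
  have hparseval (g : H) : HasSum (fun l => ⟪φ l, η⟫_ℝ * ⟪φ l, g⟫_ℝ) ⟪η, g⟫_ℝ := by
    simpa only [real_inner_comm η] using φ.hasSum_inner_mul_inner η g
  have hcoord (l : Λ) : ⟪φ l, η⟫_ℝ * ⟪φ l, hs⟫_ℝ = κ l * |⟪φ l, hs⟫_ℝ| :=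
    (hη.wnorm1_coord φ hκ l).2
  have hnorm : (WNorm1 φ κ hs).toReal = ⟪η, hs⟫_ℝ :=
    (hasSum_wnorm1_toReal φ hκ (hη.wnorm1_ne_top φ)).unique (by
      simpa only [hcoord] using hparseval hs)
  have hsum := (hasSum_wnorm1_toReal φ hκ hh).sub (hparseval h)
  rwa [show (WNorm1 φ κ h).toReal - (WNorm1 φ κ hs).toReal - ⟪η, h - hs⟫_ℝ =
    (WNorm1 φ κ h).toReal - ⟪η, h⟫_ℝ by rw [hnorm, inner_sub_right]; ring]

theorem HilbertBasis.norm_le_tsum_abs_inner (g : H) (hg : Summable fun l => |⟪φ l, g⟫_ℝ|) :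
    ‖g‖ ≤ ∑' l, |⟪φ l, g⟫_ℝ| := by
  have hS : 0 ≤ ∑' l, |⟪φ l, g⟫_ℝ| := tsum_nonneg fun l => abs_nonneg _
  refine (abs_le_of_sq_le_sq' ?_ hS).2
  rw [← (φ.hasSum_inner_sq g).tsum_eq, sq (∑' l, _), ← tsum_mul_right]
  refine (φ.hasSum_inner_sq g).summable.tsum_le_tsum (fun l => ?_) (hg.mul_right _)
  rw [← sq_abs, sq]
  exact mul_le_mul_of_nonneg_left (hg.le_tsum l fun j _ => abs_nonneg _) (abs_nonneg _)

theorem HilbertBasis.finite_setOf_le_abs_inner (η : H) {ε : ℝ} (hε : 0 < ε) :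
    {l | ε ≤ |⟪φ l, η⟫_ℝ|}.Finite := by
  have hsmall := (φ.hasSum_inner_sq η).summable.tendsto_cofinite_zero.eventually
    (gt_mem_nhds (pow_pos hε 2))
  refine (Filter.eventually_cofinite.1 hsmall).subset fun l hl => ?_
  rw [Set.mem_ofPred_eq, not_lt, ← sq_abs ⟪φ l, η⟫_ℝ]
  exact pow_le_pow_left₀ hε.le hl 2

theorem norm_le_of_forall_norm_le_mul_norm_on_span {Y : Type*} [NormedAddCommGroup Y]
    [NormedSpace ℝ Y] (A : H →L[ℝ] Y) {s : Set Λ} (hs : s.Finite) {K : ℝ} (hK0 : 0 ≤ K)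
    (hK : ∀ g ∈ (Submodule.span ℝ ((fun l => φ l) '' s) : Set H), ‖g‖ ≤ K * ‖A g‖) {g : H}
    (hg : Summable fun l => |⟪φ l, g⟫_ℝ|) :
    ‖g‖ ≤ K * ‖A g‖ + (1 + K * ‖A‖) * ∑' l, sᶜ.indicator (fun l => |⟪φ l, g⟫_ℝ|) l := by
  set S := ∑' l, sᶜ.indicator (fun l => |⟪φ l, g⟫_ℝ|) l
  set p := ∑ l ∈ hs.toFinset, ⟪φ l, g⟫_ℝ • φ l
  have hp : p ∈ Submodule.span ℝ ((fun l => φ l) '' s) :=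
    Submodule.sum_mem _ fun l hl =>
      Submodule.smul_mem _ _ (Submodule.subset_span ⟨l, hs.mem_toFinset.1 hl, rfl⟩)
  have hcoef (j : Λ) : |⟪φ j, g - p⟫_ℝ| = sᶜ.indicator (fun l => |⟪φ l, g⟫_ℝ|) j := by
    by_cases hj : j ∈ s
    · rw [inner_sub_right, φ.orthonormal.inner_right_sum _ (hs.mem_toFinset.2 hj), sub_self,
        abs_zero, Set.indicator_of_notMem (Set.notMem_compl_iff.2 hj)]
    · rw [inner_sub_right, inner_sum, Finset.sum_eq_zero, sub_zero, Set.indicator_of_mem hj]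
      intro l hl
      have hlj : j ≠ l := (ne_of_mem_of_not_mem (hs.mem_toFinset.1 hl) hj).symm
      rw [real_inner_smul_right, φ.orthonormal.2 hlj, mul_zero]
  have hw : ‖g - p‖ ≤ S := by
    have hsum : Summable fun l => |⟪φ l, g - p⟫_ℝ| := by
      simpa only [hcoef] using hg.indicator sᶜ
    simpa only [hcoef] using φ.norm_le_tsum_abs_inner (g - p) hsum
  calc ‖g‖ = ‖p + (g - p)‖ := by rw [add_sub_cancel]
  _ ≤ ‖p‖ + ‖g - p‖ := norm_add_le _ _
  _ ≤ K * ‖A g - A (g - p)‖ + S := by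
      rw [map_sub, sub_sub_cancel]
      exact add_le_add (hK p hp) hw
  _ ≤ K * (‖A g‖ + ‖A‖ * S) + S := by
      gcongr
      exact (norm_sub_le _ _).trans (by gcongr; exact (A.le_opNorm _).trans (by gcongr))
  _ = K * ‖A g‖ + (1 + K * ‖A‖) * S := by ring

/-- `Ω[η]` -/
def saturatedIndices (κ : Λ → ℝ) (η : H) : Set Λ :=
  {l | |⟪φ l, η⟫_ℝ| = κ l}

/-- `m[η]`; on an empty index set it takes Mathlib's junk value `sInf ∅ = 0`. -/
def saturationGap (κ : Λ → ℝ) (η : H) : ℝ :=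
  sInf ((fun l => κ l - |⟪φ l, η⟫_ℝ|) '' (saturatedIndices φ κ η)ᶜ)

theorem IsSubgrad.inner_eq_zero_of_notMem_saturatedIndices (hκ : ∀ l, 0 ≤ κ l)
    (hη : IsSubgrad (WNorm1 φ κ) h η) {l : Λ} (hl : l ∉ saturatedIndices φ κ η) :
    ⟪φ l, h⟫_ℝ = 0 := by
  obtain ⟨hle, heq⟩ := hη.wnorm1_coord φ hκ l
  by_contra hc
  have := mul_lt_mul_of_pos_right (hle.lt_of_ne hl) (abs_pos.2 hc)
  linarith [le_abs_self (⟪φ l, η⟫_ℝ * ⟪φ l, h⟫_ℝ), abs_mul ⟪φ l, η⟫_ℝ ⟪φ l, h⟫_ℝ]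

theorem finite_saturatedIndices {a : ℝ} (ha : 0 < a) (hκ : ∀ l, a ≤ κ l) (η : H) :
    (saturatedIndices φ κ η).Finite :=
  (φ.finite_setOf_le_abs_inner η ha).subset fun l hl => (hκ l).trans_eq hl.symm

theorem saturationGap_nonneg (hle : ∀ l, |⟪φ l, η⟫_ℝ| ≤ κ l) : 0 ≤ saturationGap φ κ η :=
  Real.sInf_nonneg (Set.forall_mem_image.2 fun l _ => sub_nonneg.2 (hle l))

theorem saturationGap_le (hle : ∀ l, |⟪φ l, η⟫_ℝ| ≤ κ l) {l : Λ}
    (hl : l ∉ saturatedIndices φ κ η) : saturationGap φ κ η ≤ κ l - |⟪φ l, η⟫_ℝ| :=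
  csInf_le ⟨0, Set.forall_mem_image.2 fun l _ => sub_nonneg.2 (hle l)⟩ ⟨l, hl, rfl⟩

theorem saturationGap_pos {a : ℝ} (ha : 0 < a) (hκ : ∀ l, a ≤ κ l)
    (hle : ∀ l, |⟪φ l, η⟫_ℝ| ≤ κ l) (hne : (saturatedIndices φ κ η)ᶜ.Nonempty) :
    0 < saturationGap φ κ η := by
  refine sInf_image_pos_of_finite (half_pos ha) (fun l hl => sub_pos.2 ((hle l).lt_of_ne hl))
    ((φ.finite_setOf_le_abs_inner η (half_pos ha)).subset fun l hl => ?_) hne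
  show a / 2 ≤ |⟪φ l, η⟫_ℝ|
  linarith [hκ l, hl.2]

theorem IsSubgrad.tsum_indicator_le_bregman_div_saturationGap {a : ℝ} (ha : 0 < a)
    (hκ : ∀ l, a ≤ κ l) (hη : IsSubgrad (WNorm1 φ κ) hs η) (hh : WNorm1 φ κ h ≠ ∞) :
    ∑' l, (saturatedIndices φ κ η)ᶜ.indicator (fun l => |⟪φ l, h - hs⟫_ℝ|) l ≤
      ((WNorm1 φ κ h).toReal - (WNorm1 φ κ hs).toReal - ⟪η, h - hs⟫_ℝ) /
        saturationGap φ κ η := by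
  have hκ0 (l : Λ) : 0 ≤ κ l := ha.le.trans (hκ l)
  have hle (l : Λ) : |⟪φ l, η⟫_ℝ| ≤ κ l := (hη.wnorm1_coord φ hκ0 l).1
  rcases (saturatedIndices φ κ η)ᶜ.eq_empty_or_nonempty with he | hne
  · simp [saturationGap, he]
  have hbreg := hη.hasSum_wnorm1_bregman φ hκ0 hh
  rw [le_div_iff₀ (saturationGap_pos φ ha hκ hle hne), ← hbreg.tsum_eq, mul_comm,
    ← tsum_mul_left]
  have hterm (l : Λ) : saturationGap φ κ η *
      (saturatedIndices φ κ η)ᶜ.indicator (fun l => |⟪φ l, h - hs⟫_ℝ|) l ≤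
        κ l * |⟪φ l, h⟫_ℝ| - ⟪φ l, η⟫_ℝ * ⟪φ l, h⟫_ℝ := by
    have hηh : ⟪φ l, η⟫_ℝ * ⟪φ l, h⟫_ℝ ≤ |⟪φ l, η⟫_ℝ| * |⟪φ l, h⟫_ℝ| :=
      (le_abs_self _).trans (abs_mul _ _).le
    by_cases hl : l ∈ (saturatedIndices φ κ η)ᶜ
    · rw [Set.indicator_of_mem hl, inner_sub_right,
        hη.inner_eq_zero_of_notMem_saturatedIndices φ hκ0 hl, sub_zero]
      nlinarith [saturationGap_le φ hle hl, abs_nonneg ⟪φ l, h⟫_ℝ]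
    · rw [Set.indicator_of_notMem hl, mul_zero]
      nlinarith [hle l, abs_nonneg ⟪φ l, h⟫_ℝ]
  refine Summable.tsum_le_tsum hterm (.of_nonneg_of_le (fun l => ?_) hterm hbreg.summable)
    hbreg.summable
  exact mul_nonneg (saturationGap_nonneg φ hle) (Set.indicator_nonneg (fun _ _ => abs_nonneg _) _)

end WeightedL1

theorem strict_norm_rate_general
    {X H Y : Type*} [NormedAddCommGroup X] [InnerProductSpace ℝ X] [CompleteSpace X]
    [NormedAddCommGroup H] [InnerProductSpace ℝ H] [CompleteSpace H]
    [NormedAddCommGroup Y] [InnerProductSpace ℝ Y] [CompleteSpace Y]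
    {Λ : Type*} (φ : HilbertBasis Λ ℝ H)
    (κ : Λ → ℝ) (a : ℝ) (ha : 0 < a) (hκ : ∀ l, a ≤ κ l)
    (W : X →L[ℝ] H) (A : H →L[ℝ] Y)
    (R : X → ℝ≥0∞)
    (hjoint : ∃ x, R x + WNorm1 φ κ (W x) ≠ ∞)
    (xstar : X) (ystar : Y) (hsol : A (W xstar) = ystar)
    (ν : Y) (hν : IsSubgrad (fun x => R x + WNorm1 φ κ (W x)) xstar
      (ContinuousLinearMap.adjoint W (ContinuousLinearMap.adjoint A ν)))
    (ξ : X) (hξ : IsSubgrad R xstar ξ)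
    (η : H) (hη : IsSubgrad (WNorm1 φ κ) (W xstar) η)
    (hsplit : ContinuousLinearMap.adjoint W (ContinuousLinearMap.adjoint A ν) =
      ξ + ContinuousLinearMap.adjoint W η)
    (K : ℝ) (hK0 : 0 ≤ K)
    (hKinv : ∀ g ∈
      (Submodule.span ℝ ((fun l => φ l) '' {l : Λ | |⟪φ l, η⟫_ℝ| = κ l}) : Set H),
      ‖g‖ ≤ K * ‖A g‖)
    (C δ : ℝ) (hC : 0 < C) (hδ : 0 < δ)
    (yδ : Y) (hdata : ‖yδ - ystar‖ ≤ δ)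
    (xad : X)
    (hmin : ∀ x : X,
      ENNReal.ofReal (‖A (W xad) - yδ‖ ^ 2 / 2) +
          ENNReal.ofReal (C * δ) * (R xad + WNorm1 φ κ (W xad)) ≤
        ENNReal.ofReal (‖A (W x) - yδ‖ ^ 2 / 2) +
          ENNReal.ofReal (C * δ) * (R x + WNorm1 φ κ (W x))) :
    ‖W xad - W xstar‖ ≤
      (2 * K * (1 + C * ‖ν‖) +
        (1 + K * ‖A‖) /
            sInf ((fun l => κ l - |⟪φ l, η⟫_ℝ|) '' {l : Λ | |⟪φ l, η⟫_ℝ| ≠ κ l}) *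
          ((1 + C * ‖ν‖) ^ 2 / (2 * C))) * δ := by
  show ‖W xad - W xstar‖ ≤ (2 * K * (1 + C * ‖ν‖) + (1 + K * ‖A‖) / saturationGap φ κ η *
    ((1 + C * ‖ν‖) ^ 2 / (2 * C))) * δ
  have hκ0 (l : Λ) : 0 ≤ κ l := ha.le.trans (hκ l)
  have hcomp : adjoint (A ∘L W) ν = adjoint W (adjoint A ν) := by rw [adjoint_comp]; rfl
  rw [← hcomp] at hν
  have hQs : R xstar + WNorm1 φ κ (W xstar) ≠ ∞ := hν.ne_top_s12 hjoint.choose_spec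
  have hmin' : ∀ x, tikhonov (A ∘L W) (fun x => R x + WNorm1 φ κ (W x)) (C * δ) yδ xad ≤
      tikhonov (A ∘L W) (fun x => R x + WNorm1 φ κ (W x)) (C * δ) yδ x := hmin
  have hQa := ne_top_of_tikhonov_le (mul_pos hC hδ) (hmin' xstar) hQs
  obtain ⟨hres, hbreg⟩ := tikhonov_rate hjoint hν hC hδ (by rwa [comp_apply, hsol]) hmin'
  rw [hcomp, hsplit] at hbreg
  have hbregN := (hξ.toReal_bregman_comp_le W η hQa hQs).trans hbreg
  have hNa := (ENNReal.add_ne_top.1 hQa).2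
  calc ‖W xad - W xstar‖
      ≤ K * ‖A (W xad - W xstar)‖ + (1 + K * ‖A‖) * ∑' l,
          (saturatedIndices φ κ η)ᶜ.indicator (fun l => |⟪φ l, W xad - W xstar⟫_ℝ|) l :=
        norm_le_of_forall_norm_le_mul_norm_on_span φ A (finite_saturatedIndices φ ha hκ η) hK0
          hKinv (summable_abs_inner_sub_of_wnorm1_ne_top φ ha hκ hNa (hη.wnorm1_ne_top φ))
    _ ≤ K * (2 * δ * (1 + C * ‖ν‖)) +
          (1 + K * ‖A‖) * (δ * (1 + C * ‖ν‖) ^ 2 / (2 * C) / saturationGap φ κ η) := by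
        rw [map_sub]
        gcongr
        · exact hres
        · exact (hη.tsum_indicator_le_bregman_div_saturationGap φ ha hκ hNa).trans
            (div_le_div_of_nonneg_right hbregN
              (saturationGap_nonneg φ fun l => (hη.wnorm1_coord φ hκ0 l).1))
    _ = _ := by ring

/-- **Strict ℓ¹ co-regularization: linear convergence in norm.**
Under the source condition `W*A*ν ∈ ∂(R + ‖W·‖_{1,κ})(xstar)`, the splitting
`W*A*ν = ξ + W*η` with `ξ ∈ ∂R(xstar)`, `η ∈ ∂‖W xstar‖_{1,κ}`, and restricted
injectivity of `A` on `H_{Ω[η]}`, with `K ≥ 0` a bound for the inverse of the restriction `A_{Ω[η]}` (the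
operator norm `‖A_{Ω[η]}⁻¹‖` is the least such `K`), every minimizer `xad` of
`𝒜_{α,yδ}` with `α = Cδ` satisfies `‖W xad - W xstar‖ ≤ d δ`, where
`d = 2K(1 + C‖ν‖) + ((1 + K‖A‖)/m[η]) (1 + C‖ν‖)²/(2C)`. -/
theorem strict_norm_rate
    {X H Y : Type*} [NormedAddCommGroup X] [InnerProductSpace ℝ X] [CompleteSpace X]
    [TopologicalSpace.SeparableSpace X]
    [NormedAddCommGroup H] [InnerProductSpace ℝ H] [CompleteSpace H]
    [NormedAddCommGroup Y] [InnerProductSpace ℝ Y] [CompleteSpace Y]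
    [TopologicalSpace.SeparableSpace Y]
    {Λ : Type*} [Countable Λ] (φ : HilbertBasis Λ ℝ H)
    (κ : Λ → ℝ) (a : ℝ) (ha : 0 < a) (hκ : ∀ l, a ≤ κ l)
    (W : X →L[ℝ] H) (A : H →L[ℝ] Y)
    (R : X → ℝ≥0∞) (hRproper : ∃ x, R x ≠ ∞) (hRconv : ConvexE R) (hRwlsc : WeakLSC R)
    (hjoint : ∃ x, R x + WNorm1 φ κ (W x) ≠ ∞)
    (xstar : X) (ystar : Y) (hsol : A (W xstar) = ystar)
    (ν : Y) (hν : IsSubgrad (fun x => R x + WNorm1 φ κ (W x)) xstar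
      (ContinuousLinearMap.adjoint W (ContinuousLinearMap.adjoint A ν)))
    (ξ : X) (hξ : IsSubgrad R xstar ξ)
    (η : H) (hη : IsSubgrad (WNorm1 φ κ) (W xstar) η)
    (hsplit : ContinuousLinearMap.adjoint W (ContinuousLinearMap.adjoint A ν) =
      ξ + ContinuousLinearMap.adjoint W η)
    (hinj : Set.InjOn A (Submodule.span ℝ ((fun l => φ l) ''
      {l : Λ | |⟪φ l, η⟫_ℝ| = κ l}) : Set H))
    (K : ℝ) (hK0 : 0 ≤ K)
    (hKinv : ∀ g ∈
      (Submodule.span ℝ ((fun l => φ l) '' {l : Λ | |⟪φ l, η⟫_ℝ| = κ l}) : Set H),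
      ‖g‖ ≤ K * ‖A g‖)
    (C δ : ℝ) (hC : 0 < C) (hδ : 0 < δ)
    (yδ : Y) (hdata : ‖yδ - ystar‖ ≤ δ)
    (xad : X)
    (hmin : ∀ x : X,
      ENNReal.ofReal (‖A (W xad) - yδ‖ ^ 2 / 2) +
          ENNReal.ofReal (C * δ) * (R xad + WNorm1 φ κ (W xad)) ≤
        ENNReal.ofReal (‖A (W x) - yδ‖ ^ 2 / 2) +
          ENNReal.ofReal (C * δ) * (R x + WNorm1 φ κ (W x))) :
    ‖W xad - W xstar‖ ≤
      (2 * K * (1 + C * ‖ν‖) +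
        (1 + K * ‖A‖) /
            sInf ((fun l => κ l - |⟪φ l, η⟫_ℝ|) '' {l : Λ | |⟪φ l, η⟫_ℝ| ≠ κ l}) *
          ((1 + C * ‖ν‖) ^ 2 / (2 * C))) * δ :=
  strict_norm_rate_general φ κ a ha hκ W A R hjoint xstar ystar hsol ν hν ξ hξ η hη hsplit K hK0
    hKinv C δ hC hδ yδ hdata xad hmin
end
end
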